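/- arXiv:1807.10046 — 8 statements merged into one kernel-verified Lean document; each statement's English description precedes it below -/
import Mathlib

section
/- Let U, V ∈ ℝ^n be vectors with components in non-decreasing order, and let t ∈ ℝ. Then the set S = {σ ∈ S_n : (σU)·V ≥ t} is an upper set in the factorial lattice on S_n; that is, if σ ∈ S and σ ≤ σ' in the factorial lattice, then σ' ∈ S. -/
/-- The covering relation of the factorial lattice on permutations, where a permutation σ is
written as the sequence `(a_1,…,a_n)` with `σ (a i) = i`, i.e. `a i = σ⁻¹ i`. -/
def FactCover {n : ℕ} (σ τ : Equiv.Perm (Fin n)) : Prop :=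
  ∃ i j : Fin n, i < j ∧ σ.symm j < σ.symm i ∧ σ.symm i = τ.symm j ∧ σ.symm j = τ.symm i ∧
    (∀ k : Fin n, k ≠ i → k ≠ j → σ.symm k = τ.symm k) ∧
    (∀ k : Fin n, i < k → k < j → σ.symm i < σ.symm k)

/-- The factorial lattice order: the reflexive transitive closure of `FactCover`. -/
def FactLe {n : ℕ} (σ τ : Equiv.Perm (Fin n)) : Prop :=
  Relation.ReflTransGen FactCover σ τ

/-!
Along a covering step of the factorial lattice, `σ⁻¹` and `τ⁻¹` differ by exchanging the values
at two positions `i < j`, the larger value moving to the later position. Only the two terms at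
`i` and `j` change, and by the two-term rearrangement inequality the sum `∑ U (σ⁻¹ k) * V k` can
only grow.
-/

theorem sum_mul_le_sum_mul_of_exchange {ι κ R : Type*} [Fintype ι] [Preorder ι] [Preorder κ]
    [CommRing R] [LinearOrder R] [IsOrderedRing R] {f : κ → R} {g : ι → R}
    (hf : Monotone f) (hg : Monotone g) {p q : ι → κ} {i j : ι} (hij : i < j) (hp : p j ≤ p i)
    (hqi : q i = p j) (hqj : q j = p i) (hq : ∀ k, k ≠ i → k ≠ j → q k = p k) :
    ∑ k, f (p k) * g k ≤ ∑ k, f (q k) * g k := by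
  rw [← sub_nonneg, ← Finset.sum_sub_distrib,
    Fintype.sum_eq_add i j hij.ne fun k hk => by rw [hq k hk.1 hk.2, sub_self], hqi, hqj]
  exact (sub_nonneg.2 (mul_add_mul_le_mul_add_mul (hf hp) (hg hij.le))).trans_eq (by ring)

section FactorialLattice

variable {n : ℕ} {R : Type*} [CommRing R] [LinearOrder R] [IsOrderedRing R]
  {U V : Fin n → R} {σ τ : Equiv.Perm (Fin n)}

theorem FactCover.sum_mul_le (hU : Monotone U) (hV : Monotone V) (h : FactCover σ τ) :
    ∑ k, U (σ.symm k) * V k ≤ ∑ k, U (τ.symm k) * V k := by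
  obtain ⟨i, j, hij, hlt, hi, hj, hrest, -⟩ := h
  exact sum_mul_le_sum_mul_of_exchange hU hV hij hlt.le hj.symm hi.symm
    fun k hki hkj => (hrest k hki hkj).symm

theorem FactLe.sum_mul_le (hU : Monotone U) (hV : Monotone V) (h : FactLe σ τ) :
    ∑ k, U (σ.symm k) * V k ≤ ∑ k, U (τ.symm k) * V k := by
  induction h with
  | refl => exact le_rfl
  | tail _ hcov ih => exact ih.trans (hcov.sum_mul_le hU hV)

end FactorialLattice

/-- For vectors `U, V ∈ ℝ^n` with non-decreasing components and `t ∈ ℝ`, the set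
`S = {σ : (σU)·V ≥ t}` is an upper set in the factorial lattice, where
`(σU) i = U (σ⁻¹ i)`. -/
theorem stmt2 {n : ℕ} (U V : Fin n → ℝ) (hU : Monotone U) (hV : Monotone V) (t : ℝ)
    (σ τ : Equiv.Perm (Fin n)) (hσ : t ≤ ∑ i, U (σ.symm i) * V i) (hle : FactLe σ τ) :
    t ≤ ∑ i, U (τ.symm i) * V i :=
  hσ.trans (hle.sum_mul_le hU hV)
end

section
/- Let S be an upper set in the product partial order on ∏_{k=1}^n {0,...,k-1}. Then the discrepancy of S — the absolute difference between the number of points of S whose coordinate sum is even and the number whose coordinate sum is odd — is at most n!/n = (n-1)!. -/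
/-!
Split off the last coordinate, which ranges over `Fin n`. For fixed values of the other
coordinates, the admissible last coordinates of points of an upper set form an upper set of
`Fin n`, i.e. an interval `[t, n)`, and alternating signs over an interval sum to `-1`, `0` or `1`.
Summing over the `(n - 1)!` choices of the other coordinates bounds the signed count of `S`,
which is its discrepancy.
-/

open Finset

lemma abs_sum_Ico_neg_one_pow_le_one (a b : ℕ) : |∑ k ∈ Ico a b, (-1 : ℤ) ^ k| ≤ 1 := by
  rcases le_or_gt a b with hab | hba
  · rw [sum_Ico_eq_sub _ hab, neg_one_geom_sum, neg_one_geom_sum]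
    split_ifs <;> norm_num
  · simp [Ico_eq_empty_of_le hba.le]

lemma abs_sum_neg_one_pow_le_one_of_isUpperSet {k : ℕ} {U : Finset (Fin k)}
    (hU : IsUpperSet (U : Set (Fin k))) : |∑ c ∈ U, (-1 : ℤ) ^ (c : ℕ)| ≤ 1 := by
  rcases hU.eq_empty_or_Ici with hempty | ⟨t, hIci⟩
  · simp [coe_eq_empty.mp hempty]
  · rw [← coe_Ici, coe_inj] at hIci
    have hmap := sum_map (Ici t) Fin.valEmbedding fun k => (-1 : ℤ) ^ k
    rw [Fin.map_valEmbedding_Ici] at hmap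
    rw [hIci]
    exact hmap ▸ abs_sum_Ico_neg_one_pow_le_one _ _

lemma sum_neg_one_pow_eq_card_filter_even_sub_card_filter_odd {α : Type*} (S : Finset α)
    (f : α → ℕ) :
    ∑ x ∈ S, (-1 : ℤ) ^ f x = (#{x ∈ S | Even (f x)} : ℤ) - #{x ∈ S | Odd (f x)} := by
  rw [natCast_card_filter, natCast_card_filter, ← sum_sub_distrib]
  refine sum_congr rfl fun x _ => ?_
  rcases Nat.even_or_odd (f x) with h | h
  · simp [h.neg_one_pow, Nat.not_odd_iff_even.mpr h]
  · simp [h.neg_one_pow, Nat.not_even_iff_odd.mpr h]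

lemma abs_sum_neg_one_pow_le_card {α : Type*} (S : Finset α) (f : α → ℕ) :
    |∑ x ∈ S, (-1 : ℤ) ^ f x| ≤ #S :=
  (abs_sum_le_sum_abs _ _).trans (by simp)

lemma abs_sum_neg_one_pow_le_card_of_isUpperSet_fiber {β : Type*} [Fintype β] {k : ℕ}
    (w : β → ℕ) (S : Finset (Fin k × β))
    (hS : ∀ b, ∀ c c' : Fin k, c ≤ c' → (c, b) ∈ S → (c', b) ∈ S) :
    |∑ p ∈ S, (-1 : ℤ) ^ ((p.1 : ℕ) + w p.2)| ≤ Fintype.card β := by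
  classical
  have hfiber : ∑ p ∈ S, (-1 : ℤ) ^ ((p.1 : ℕ) + w p.2) =
      ∑ b, (-1 : ℤ) ^ w b * ∑ c ∈ {c | (c, b) ∈ S}, (-1 : ℤ) ^ (c : ℕ) := by
    rw [← Fintype.sum_ite_mem, Fintype.sum_prod_type, sum_comm]
    refine sum_congr rfl fun b _ => ?_
    rw [sum_filter, mul_sum]
    refine sum_congr rfl fun c _ => ?_
    split_ifs <;> ring
  have hupper : ∀ b, IsUpperSet (({c | (c, b) ∈ S} : Finset (Fin k)) : Set (Fin k)) :=
    fun b c c' hle hc => by simpa using hS b c c' hle (by simpa using hc)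
  rw [hfiber]
  calc _ ≤ ∑ b, |(-1 : ℤ) ^ w b * ∑ c ∈ {c | (c, b) ∈ S}, (-1 : ℤ) ^ (c : ℕ)| :=
        abs_sum_le_sum_abs _ _
    _ ≤ ∑ _b : β, (1 : ℤ) := sum_le_sum fun b _ => by
        simpa [abs_mul] using abs_sum_neg_one_pow_le_one_of_isUpperSet (hupper b)
    _ = Fintype.card β := by simp

lemma Fintype.card_pi_fin_succ (n : ℕ) :
    Fintype.card ((i : Fin n) → Fin (i.1 + 1)) = n.factorial := by
  rw [Fintype.card_pi]
  simp only [Fintype.card_fin]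
  rw [Fin.prod_univ_eq_prod_range (· + 1), prod_range_add_one_eq_factorial]

lemma Fin.snoc_le_snoc {n : ℕ} {α : Fin (n + 1) → Type*} [∀ i, Preorder (α i)]
    (x : (i : Fin n) → α i.castSucc) {a b : α (Fin.last n)} (hab : a ≤ b) :
    (Fin.snoc x a : (i : Fin (n + 1)) → α i) ≤ Fin.snoc x b := by
  intro i
  induction i using Fin.lastCases <;> simp [hab]

lemma Fin.sum_val_snoc {n : ℕ} (x : (i : Fin n) → Fin (i.1 + 1)) (a : Fin (n + 1)) :
    ∑ i, ((Fin.snoc x a : (i : Fin (n + 1)) → Fin (i.1 + 1)) i : ℕ) = a + ∑ i, (x i : ℕ) := by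
  simp [Fin.sum_univ_castSucc, add_comm]

/-- Let `S` be an upper set in the product partial order on `∏_{k=1}^n {0,…,k-1}`
(realized as `(i : Fin n) → Fin (i+1)`). Then the discrepancy of `S` — the absolute
difference between the number of points of `S` with even coordinate sum and the number
with odd coordinate sum — is at most `n!/n = (n-1)!`. -/
theorem stmt3 (n : ℕ) (S : Finset ((i : Fin n) → Fin (i.1 + 1)))
    (hupper : ∀ x ∈ S, ∀ y : (i : Fin n) → Fin (i.1 + 1), x ≤ y → y ∈ S) :
    |((S.filter fun x => Even (∑ i, (x i : ℕ))).card : ℤ) -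
      ((S.filter fun x => Odd (∑ i, (x i : ℕ))).card : ℤ)| ≤ Nat.factorial (n - 1) := by
  rw [← sum_neg_one_pow_eq_card_filter_even_sub_card_filter_odd]
  cases n with
  | zero =>
    calc _ ≤ (#S : ℤ) := abs_sum_neg_one_pow_le_card S _
      _ ≤ 1 := by exact_mod_cast S.card_le_univ.trans (by simp)
  | succ m =>
    let e := Fin.snocEquiv fun i : Fin (m + 1) => Fin (i.1 + 1)
    let T := S.map e.symm.toEmbedding
    have hsplit : ∑ x ∈ S, (-1 : ℤ) ^ ∑ i, (x i : ℕ) =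
        ∑ p ∈ T, (-1 : ℤ) ^ ((p.1 : ℕ) + ∑ i, (p.2 i : ℕ)) :=
      (sum_equiv e (by simp [T]) fun p _ => by simp [e, Fin.sum_val_snoc]).symm
    have hT : ∀ y, ∀ c c' : Fin (m + 1), c ≤ c' → (c, y) ∈ T → (c', y) ∈ T := by
      intro y c c' hle hc
      rw [mem_map_equiv, Equiv.symm_symm] at hc ⊢
      exact hupper _ hc _ (Fin.snoc_le_snoc (α := fun i : Fin (m + 1) => Fin (i.1 + 1)) y hle)
    -- spelled with `castSucc`, as in the type of `Fin.snocEquiv`, so that unification stays cheap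
    have hcard : Fintype.card ((i : Fin m) → Fin ((Fin.castSucc i : ℕ) + 1)) = m.factorial :=
      Fintype.card_pi_fin_succ m
    rw [hsplit, Nat.add_sub_cancel, ← hcard]
    exact abs_sum_neg_one_pow_le_card_of_isUpperSet_fiber
      (fun y : (i : Fin m) → Fin ((Fin.castSucc i : ℕ) + 1) => ∑ i, (y i : ℕ)) T hT
end

section
/- Let S ⊆ S_n be an upper set in the factorial lattice. Then |Σ_{σ ∈ S} sgn(σ)| ≤ n!/n, where sgn is the sign of the permutation. -/
/-!
Write `σ = (cycleRange t)⁻¹ * ρ` with `ρ (last) = 0`, so `t = σ (last)`. For fixed `ρ` the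
sequence `σ⁻¹` is `ρ⁻¹` with its largest entry moved to position `t`; moving it one step to the
right swaps an adjacent descent, which is a cover in the factorial lattice, and flips the sign.
Hence an upper set meets each of the `(n-1)!` classes of `ρ` in a final segment `t ≥ t₀` of this
chain, where the signs alternate, so each class contributes at most `1` in absolute value.
-/

open Finset Equiv Equiv.Perm

theorem abs_sum_neg_one_pow_Ico_le_one {R : Type*} [Ring R] [LinearOrder R] [IsOrderedRing R]
    (a b : ℕ) : |∑ i ∈ Ico a b, (-1 : R) ^ i| ≤ 1 := by
  rw [sum_Ico_eq_sum_range]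
  simp only [pow_add, ← mul_sum, neg_one_geom_sum, abs_mul, abs_pow, abs_neg, abs_one, one_pow,
    one_mul]
  split_ifs <;> simp

theorem abs_sum_neg_one_pow_le_one_of_isUpperSet_s4 {R : Type*} [Ring R] [LinearOrder R]
    [IsOrderedRing R] {n : ℕ} (T : Finset (Fin n)) (hT : IsUpperSet (T : Set (Fin n))) :
    |∑ t ∈ T, (-1 : R) ^ (t : ℕ)| ≤ 1 := by
  obtain hT | ⟨a, hT⟩ := hT.eq_empty_or_Ici
  · simp [coe_eq_empty.mp hT]
  · rw [← coe_Ici, coe_inj] at hT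
    have hval := sum_map (Ici a) Fin.valEmbedding fun i => (-1 : R) ^ i
    rw [Fin.map_valEmbedding_Ici] at hval
    simpa [hT, hval] using abs_sum_neg_one_pow_Ico_le_one (R := R) a n

theorem factCover_swap_castSucc_succ_mul {m : ℕ} (σ : Perm (Fin (m + 1))) (i : Fin m)
    (h : σ.symm i.succ < σ.symm i.castSucc) :
    FactCover σ (swap i.castSucc i.succ * σ) := by
  have hsymm (k) : (swap i.castSucc i.succ * σ).symm k = σ.symm (swap i.castSucc i.succ k) :=
    rfl
  refine ⟨i.castSucc, i.succ, Fin.castSucc_lt_succ, h, ?_, ?_, ?_, ?_⟩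
  · simp [hsymm]
  · simp [hsymm]
  · intro k hk₁ hk₂; simp [hsymm, swap_apply_of_ne_of_ne hk₁ hk₂]
  · intro k hk₁ hk₂
    rw [Fin.castSucc_lt_iff_succ_le] at hk₁
    exact absurd hk₂ (not_lt.mpr hk₁)

theorem Fin.cycleRange_succ_eq_mul_swap {m : ℕ} (i : Fin m) :
    Fin.cycleRange i.succ = Fin.cycleRange i.castSucc * swap i.castSucc i.succ := by
  ext k
  simp only [Perm.mul_apply, swap_apply_def]
  split_ifs with h₁ h₂
  · subst h₁
    simp [Fin.cycleRange_of_lt Fin.castSucc_lt_succ, Fin.cycleRange_of_gt Fin.castSucc_lt_succ]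
  · subst h₂; simp
  · rcases lt_or_gt_of_ne h₁ with hlt | hgt
    · rw [Fin.cycleRange_of_lt hlt, Fin.cycleRange_of_lt (hlt.trans Fin.castSucc_lt_succ)]
    · have : i.succ < k := lt_of_le_of_ne (Fin.castSucc_lt_iff_succ_le.mp hgt) (Ne.symm h₂)
      rw [Fin.cycleRange_of_gt hgt, Fin.cycleRange_of_gt this]

def cycleRangeInvMulEquiv (m : ℕ) :
    Fin (m + 1) × {ρ : Perm (Fin (m + 1)) // ρ (Fin.last m) = 0} ≃ Perm (Fin (m + 1)) where
  toFun p := (Fin.cycleRange p.1)⁻¹ * p.2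
  invFun σ := (σ (Fin.last m), ⟨Fin.cycleRange (σ (Fin.last m)) * σ, Fin.cycleRange_self _⟩)
  left_inv := by
    rintro ⟨t, ρ, hρ⟩
    have ht : ((Fin.cycleRange t)⁻¹ * ρ) (Fin.last m) = t := by
      rw [Perm.mul_apply, hρ, Perm.inv_eq_iff_eq, Fin.cycleRange_self]
    ext <;> simp only [ht, mul_inv_cancel_left]
  right_inv σ := inv_mul_cancel_left _ _

theorem card_perm_apply_last_eq_zero (m : ℕ) :
    Fintype.card {ρ : Perm (Fin (m + 1)) // ρ (Fin.last m) = 0} = m.factorial := by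
  have h := Fintype.card_congr (cycleRangeInvMulEquiv m)
  rw [Fintype.card_prod, Fintype.card_fin, Fintype.card_perm, Fintype.card_fin,
    Nat.factorial_succ] at h
  exact Nat.eq_of_mul_eq_mul_left m.succ_pos h

theorem sign_cycleRange_inv_mul {n : ℕ} (t : Fin n) (ρ : Perm (Fin n)) :
    sign ((Fin.cycleRange t)⁻¹ * ρ) = (-1) ^ (t : ℕ) * sign ρ := by
  rw [map_mul, sign_inv, Fin.sign_cycleRange]

theorem factCover_cycleRange_inv_mul {m : ℕ} (ρ : Perm (Fin (m + 1))) (hρ : ρ (Fin.last m) = 0)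
    (i : Fin m) :
    FactCover ((Fin.cycleRange i.castSucc)⁻¹ * ρ) ((Fin.cycleRange i.succ)⁻¹ * ρ) := by
  rw [Fin.cycleRange_succ_eq_mul_swap, mul_inv_rev, swap_inv, mul_assoc]
  apply factCover_swap_castSucc_succ_mul
  have hsymm (k) : ((Fin.cycleRange i.castSucc)⁻¹ * ρ).symm k =
      ρ.symm (Fin.cycleRange i.castSucc k) := rfl
  have hlast : ρ.symm 0 = Fin.last m := ρ.symm_apply_eq.mpr hρ.symm
  rw [hsymm, hsymm, Fin.cycleRange_self, Fin.cycleRange_of_gt Fin.castSucc_lt_succ, hlast]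
  refine (Fin.le_last _).lt_of_ne fun h => Fin.succ_ne_zero i ?_
  rw [← hlast] at h
  exact ρ.symm.injective h

theorem factLe_cycleRange_inv_mul {m : ℕ} (ρ : Perm (Fin (m + 1))) (hρ : ρ (Fin.last m) = 0)
    {s t : Fin (m + 1)} (hst : s ≤ t) :
    FactLe ((Fin.cycleRange s)⁻¹ * ρ) ((Fin.cycleRange t)⁻¹ * ρ) := by
  let f (t : Fin (m + 1)) := (Fin.cycleRange t)⁻¹ * ρ
  refine Relation.ReflTransGen.lift f (r := fun s t => FactCover (f s) (f t)) (fun _ _ => id) _ _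
    (reflTransGen_of_succ_of_le _ (fun i hi => ?_) hst)
  obtain ⟨i, rfl⟩ := Fin.eq_castSucc_of_ne_last (hi.2.trans_le (Fin.le_last t)).ne
  rw [Fin.orderSucc_castSucc]
  exact factCover_cycleRange_inv_mul ρ hρ i

theorem sum_eq_sum_sum_cycleRange_inv_mul {M : Type*} [AddCommMonoid M] {m : ℕ}
    (S : Finset (Perm (Fin (m + 1)))) (g : Perm (Fin (m + 1)) → M) :
    ∑ σ ∈ S, g σ = ∑ ρ : {ρ : Perm (Fin (m + 1)) // ρ (Fin.last m) = 0},
      ∑ t ∈ univ.filter (fun t => (Fin.cycleRange t)⁻¹ * ρ.1 ∈ S),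
        g ((Fin.cycleRange t)⁻¹ * ρ.1) := by
  calc ∑ σ ∈ S, g σ = ∑ σ, if σ ∈ S then g σ else 0 := by rw [sum_ite_mem, univ_inter]
    _ = ∑ p, if cycleRangeInvMulEquiv m p ∈ S then g (cycleRangeInvMulEquiv m p) else 0 :=
      (Fintype.sum_equiv _ _ _ fun _ => rfl).symm
    _ = _ := by rw [Fintype.sum_prod_type_right]; simp only [sum_filter]; rfl

theorem abs_sum_sign_cycleRange_inv_mul_le_one {m : ℕ} (S : Finset (Perm (Fin (m + 1))))
    (hupper : ∀ σ ∈ S, ∀ τ : Perm (Fin (m + 1)), FactLe σ τ → τ ∈ S)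
    (ρ : Perm (Fin (m + 1))) (hρ : ρ (Fin.last m) = 0) :
    |∑ t ∈ univ.filter (fun t => (Fin.cycleRange t)⁻¹ * ρ ∈ S),
      ((sign ((Fin.cycleRange t)⁻¹ * ρ) : ℤˣ) : ℤ)| ≤ 1 := by
  simp only [sign_cycleRange_inv_mul, Units.val_mul, Units.val_pow_eq_pow_val, Units.val_neg,
    Units.val_one, ← sum_mul, abs_mul, sign_abs, mul_one]
  refine abs_sum_neg_one_pow_le_one_of_isUpperSet_s4 _ fun s t hst hs => ?_
  simp only [coe_filter, mem_univ, true_and, Set.mem_ofPred_eq] at hs ⊢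
  exact hupper _ hs _ (factLe_cycleRange_inv_mul ρ hρ hst)

/-- Let `S ⊆ S_n` be an upper set in the factorial lattice.
Then `|Σ_{σ ∈ S} sgn σ| ≤ n!/n = (n-1)!`. -/
theorem stmt4 (n : ℕ) (S : Finset (Equiv.Perm (Fin n)))
    (hupper : ∀ σ ∈ S, ∀ τ : Equiv.Perm (Fin n), FactLe σ τ → τ ∈ S) :
    |∑ σ ∈ S, ((Equiv.Perm.sign σ : ℤˣ) : ℤ)| ≤ Nat.factorial (n - 1) := by
  obtain _ | m := n
  · refine (abs_sum_le_sum_abs _ _).trans ?_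
    simpa using card_le_univ S
  · rw [Nat.add_sub_cancel, ← card_perm_apply_last_eq_zero, sum_eq_sum_sum_cycleRange_inv_mul]
    refine (abs_sum_le_sum_abs _ _).trans ((sum_le_sum fun ρ _ =>
      abs_sum_sign_cycleRange_inv_mul_le_one S hupper ρ.1 ρ.2).trans_eq ?_)
    simp
end

section
/- For n ≥ 400, every irreducible representation ρ of the symmetric group S_n has dimension d_ρ > n²/3, except for the trivial representation, the sign (alternating) representation, the standard representation (partition (n−1,1)), and its conjugate (partition (2,1^{n−2})). -/
/-- `f : ℕ × ℕ → ℕ` is a standard Young tableau of shape `μ`: it maps the cells of `μ`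
bijectively onto `{1,…,n}` (where `n = μ.card`), vanishes outside `μ`, and is strictly
increasing along rows and columns. -/
def IsSYT (μ : YoungDiagram) (f : ℕ × ℕ → ℕ) : Prop :=
  Set.BijOn f ↑μ.cells (Set.Icc 1 μ.card) ∧
  (∀ p : ℕ × ℕ, p ∉ μ → f p = 0) ∧
  (∀ p q : ℕ × ℕ, p ∈ μ → q ∈ μ → p.1 = q.1 → p.2 < q.2 → f p < f q) ∧
  (∀ p q : ℕ × ℕ, p ∈ μ → q ∈ μ → p.2 = q.2 → p.1 < q.1 → f p < f q)

/-- The number of standard Young tableaux of shape `μ`; this equals the dimension of the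
irreducible representation of `S_n` indexed by `μ`. -/
noncomputable def sytCount (μ : YoungDiagram) : ℕ :=
  Nat.card {f : ℕ × ℕ → ℕ // IsSYT μ f}

/-!
Lower bounds for `sytCount` come from explicit injective families of tableaux. If the second row
has length `k`, the entries `1, …, 2k` can be placed column by column in the top `2 × k` block,
and for each `1 ≤ j < k` the entries `2j` and `2j + 1` may independently be swapped: this gives
`2 ^ (k - 1)` tableaux. If `l` rows have length at least two and the other `b - l` rows have
length one, the entries of those one-cell rows can be any `(b - l)`-subset of `(l, n]`: this
gives `choose (n - l) (b - l)` tableaux. Both bounds also apply to the transpose.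

Let `L = log₂ n`. If the second row (or column) has length at least `2L + 4`, the first bound
exceeds `n²`. Otherwise, if there are at least two rows (or columns) of length one, the excluded
shapes make `2 ≤ b - l ≤ n - l - 2`, so the second bound is at least `choose (n - 2L - 4) 2`,
which exceeds `n² / 3` for `n ≥ 400`. In the remaining case the diagram is nearly a square, so
after transposing if necessary `n ≤ (k + 1)²` and `2 ^ (k - 1) > (k + 1) ^ 4 ≥ n²`.
-/

namespace Nat

theorem choose_le_choose_of_le_half {n r s : ℕ} (hrs : r ≤ s) (hs : s ≤ n / 2) :
    n.choose r ≤ n.choose s := by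
  induction s, hrs using Nat.le_induction with
  | base => rfl
  | succ s _ ih => exact (ih (by omega)).trans (choose_le_succ_of_lt_half_left (by omega))

theorem choose_le_choose_of_le_of_add_le {n r s : ℕ} (hrs : r ≤ s) (hn : r + s ≤ n) :
    n.choose r ≤ n.choose s := by
  rcases le_or_gt s (n / 2) with hs | hs
  · exact choose_le_choose_of_le_half hrs hs
  · rw [← choose_symm (by omega : s ≤ n)]
    exact choose_le_choose_of_le_half (by omega) (by omega)

theorem twelve_mul_log_add_thirty_le {n : ℕ} (hn : 400 ≤ n) : 12 * Nat.log 2 n + 30 ≤ n := by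
  have hL : 8 ≤ Nat.log 2 n := Nat.le_log_of_pow_le (by norm_num) (by omega)
  have key : ∀ L, 8 ≤ L → 12 * L + 30 ≤ 2 ^ L := by
    intro L hL
    induction L, hL using Nat.le_induction with
    | base => norm_num
    | succ L _ ih => rw [pow_succ]; omega
  exact (key _ hL).trans (Nat.pow_log_le_self 2 (by omega))

theorem sq_lt_two_pow_two_mul_log_add_two (n : ℕ) : n ^ 2 < 2 ^ (2 * Nat.log 2 n + 2) := by
  calc n ^ 2 < (2 ^ (Nat.log 2 n + 1)) ^ 2 :=
        Nat.pow_lt_pow_left (Nat.lt_pow_succ_log_self one_lt_two n) two_ne_zero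
    _ = 2 ^ (2 * Nat.log 2 n + 2) := by ring

theorem sq_lt_three_mul_choose_two {n : ℕ} (hn : 400 ≤ n) :
    n ^ 2 < 3 * (n - (2 * Nat.log 2 n + 4)).choose 2 := by
  have hlog := twelve_mul_log_add_thirty_le hn
  set m := n - (2 * Nat.log 2 n + 4)
  have hm : 5 * n + 6 ≤ 6 * m := by omega
  have hchoose : 2 * m.choose 2 = m * (m - 1) := by
    rw [choose_two_right, Nat.mul_div_cancel' (Nat.even_mul_pred_self m).two_dvd]
  have : 5 * n ≤ 6 * (m - 1) := by omega
  nlinarith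

theorem add_one_pow_four_lt_two_pow {k : ℕ} (hk : 18 ≤ k) : (k + 1) ^ 4 < 2 ^ (k - 1) := by
  induction k, hk using Nat.le_induction with
  | base => norm_num
  | succ k hk ih =>
    have hk2 : 18 * k ≤ k ^ 2 := by nlinarith
    have hk3 : 18 * k ^ 2 ≤ k ^ 3 := by nlinarith
    have hk4 : 18 * k ^ 3 ≤ k ^ 4 := by nlinarith
    have : (k + 1 + 1) ^ 4 ≤ 2 * (k + 1) ^ 4 := by ring_nf; nlinarith
    rw [show k + 1 - 1 = k - 1 + 1 by omega, pow_succ 2 (k - 1)]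
    omega

end Nat

namespace Finset

theorem sum_range_add_lt_sum_range (f : ℕ → ℕ) {i i' j : ℕ} (hj : j < f i) (hi : i < i') :
    ∑ x ∈ range i, f x + j < ∑ x ∈ range i', f x :=
  calc ∑ x ∈ range i, f x + j < ∑ x ∈ range (i + 1), f x := by
        rw [sum_range_succ]; omega
    _ ≤ ∑ x ∈ range i', f x :=
        sum_le_sum_of_subset (range_subset_range.2 hi)

theorem nth_mem_of_lt_card (s : Finset ℕ) {m : ℕ} (h : m < s.card) :
    Nat.nth (· ∈ s) m ∈ s :=
  Nat.nth_mem_of_lt_card (p := (· ∈ s)) s.finite_toSet (by simpa using h)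

theorem nth_lt_nth_of_lt_card (s : Finset ℕ) {m m' : ℕ} (h : m < m') (h' : m' < s.card) :
    Nat.nth (· ∈ s) m < Nat.nth (· ∈ s) m' :=
  Nat.nth_lt_nth_of_lt_card (p := (· ∈ s)) s.finite_toSet h (by simpa using h')

theorem exists_lt_card_nth_eq {s : Finset ℕ} {y : ℕ} (hy : y ∈ s) :
    ∃ m < s.card, Nat.nth (· ∈ s) m = y := by
  simpa using Nat.exists_lt_card_finite_nth_eq (p := (· ∈ s)) s.finite_toSet hy

end Finset

namespace YoungDiagram

open Finset

@[simp]
theorem card_transpose (μ : YoungDiagram) : μ.transpose.card = μ.card := by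
  simp [YoungDiagram.card, transpose]

theorem sum_rowLen_eq_card (μ : YoungDiagram) :
    ∑ i ∈ range (μ.colLen 0), μ.rowLen i = μ.card := by
  classical
  rw [YoungDiagram.card, card_eq_sum_card_fiberwise (f := Prod.fst) (t := range (μ.colLen 0))]
  · exact sum_congr rfl fun i _ => μ.rowLen_eq_card
  · intro c hc
    have hc : (c.1, c.2) ∈ μ := by simpa using hc
    exact mem_range.2 (mem_iff_lt_colLen.1 (μ.up_left_mem le_rfl (Nat.zero_le _) hc))

theorem card_le_rowLen_mul_colLen (μ : YoungDiagram) : μ.card ≤ μ.rowLen 0 * μ.colLen 0 := by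
  calc μ.card ≤ (range (μ.colLen 0) ×ˢ range (μ.rowLen 0)).card := by
        refine card_le_card fun c hc => ?_
        have hc : (c.1, c.2) ∈ μ := by simpa using hc
        simp only [mem_product, mem_range]
        exact ⟨mem_iff_lt_colLen.1 (μ.up_left_mem le_rfl (Nat.zero_le _) hc),
          mem_iff_lt_rowLen.1 (μ.up_left_mem (Nat.zero_le _) le_rfl hc)⟩
    _ = μ.rowLen 0 * μ.colLen 0 := by rw [card_product, card_range, card_range, mul_comm]

theorem rowLen_zero_add_colLen_zero_le (μ : YoungDiagram) :
    μ.rowLen 0 + μ.colLen 0 ≤ μ.card + 1 := by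
  classical
  have hinter : (μ.row 0 ∩ μ.col 0).card ≤ 1 := by
    refine card_le_one.2 fun c hc d hd => ?_
    simp only [mem_inter, mem_row_iff, mem_col_iff] at hc hd
    exact Prod.ext (hc.1.2.trans hd.1.2.symm) (hc.2.2.trans hd.2.2.symm)
  have hunion : (μ.row 0 ∪ μ.col 0).card ≤ μ.card :=
    card_le_card (union_subset (filter_subset _ _) (filter_subset _ _))
  rw [rowLen_eq_card, colLen_eq_card]
  have := card_union_add_card_inter (μ.row 0) (μ.col 0)
  omega

theorem rowLens_eq_of_rowLen_eq {μ : YoungDiagram} {L : List ℕ} (hlen : μ.colLen 0 = L.length)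
    (h : ∀ i (hi : i < L.length), μ.rowLen i = L[i]) : μ.rowLens = L :=
  List.ext_getElem (by simpa using hlen) fun i _ hi => by simpa using h i hi

theorem rowLen_zero_add_two_le (μ : YoungDiagram) (hμ : 0 < μ.card)
    (htriv : μ.rowLens ≠ [μ.card]) (hstd : μ.rowLens ≠ [μ.card - 1, 1]) :
    μ.rowLen 0 + 2 ≤ μ.card := by
  have hhook := μ.rowLen_zero_add_colLen_zero_le
  have hsum := μ.sum_rowLen_eq_card
  by_contra! h
  obtain hb | hb | hb : μ.colLen 0 = 0 ∨ μ.colLen 0 = 1 ∨ μ.colLen 0 = 2 := by omega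
  · simp only [hb, range_zero, sum_empty] at hsum
    omega
  · simp only [hb, Finset.sum_range_one] at hsum
    refine htriv (rowLens_eq_of_rowLen_eq (by simpa) fun i hi => ?_)
    obtain rfl : i = 0 := by simpa using hi
    simpa
  · have hrow1 : 0 < μ.rowLen 1 := mem_iff_lt_rowLen.1 (mem_iff_lt_colLen.2 (by omega))
    simp only [hb, Finset.sum_range_succ, Finset.sum_range_zero] at hsum
    refine hstd (rowLens_eq_of_rowLen_eq (by simpa) fun i hi => ?_)
    obtain rfl | rfl : i = 0 ∨ i = 1 := by
      simp only [List.length_cons, List.length_nil] at hi; omega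
    · rw [List.getElem_cons_zero]; omega
    · rw [List.getElem_cons_succ, List.getElem_cons_zero]; omega

theorem colLen_zero_add_two_le (μ : YoungDiagram) (hsign : μ.rowLens ≠ List.replicate μ.card 1)
    (hstd : μ.rowLens ≠ 2 :: List.replicate (μ.card - 2) 1) :
    μ.colLen 0 + 2 ≤ μ.card := by
  have hhook := μ.rowLen_zero_add_colLen_zero_le
  have hsum := μ.transpose.sum_rowLen_eq_card
  simp only [rowLen_transpose, colLen_transpose, card_transpose] at hsum
  have hrow : ∀ i < μ.colLen 0, 0 < μ.rowLen i := fun i hi =>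
    mem_iff_lt_rowLen.1 (mem_iff_lt_colLen.2 hi)
  have hanti : ∀ i, μ.rowLen i ≤ μ.rowLen 0 := fun i => μ.rowLen_anti 0 i (Nat.zero_le i)
  by_contra! h
  obtain ha | ha | ha : μ.rowLen 0 = 0 ∨ μ.rowLen 0 = 1 ∨ μ.rowLen 0 = 2 := by omega
  · have hb : μ.colLen 0 = 0 := by
      by_contra hb
      exact absurd (hrow 0 (by omega)) (by omega)
    simp only [ha, range_zero, sum_empty] at hsum
    refine hsign (rowLens_eq_of_rowLen_eq ?_ fun i hi => ?_)
    · rw [← hsum, hb, List.length_replicate]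
    · rw [List.length_replicate] at hi; omega
  · simp only [ha, Finset.sum_range_one] at hsum
    refine hsign (rowLens_eq_of_rowLen_eq (by simpa) fun i hi => ?_)
    rw [List.length_replicate] at hi
    have := hrow i (by omega)
    have := hanti i
    rw [List.getElem_replicate]
    omega
  · simp only [ha, Finset.sum_range_succ, Finset.sum_range_zero] at hsum
    have hl : 0 < μ.colLen 1 := mem_iff_lt_colLen.1 (mem_iff_lt_rowLen.2 (by omega))
    have := μ.colLen_anti 0 1 zero_le_one
    refine hstd (rowLens_eq_of_rowLen_eq ?_ fun i hi => ?_)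
    · rw [List.length_cons, List.length_replicate]; omega
    rw [List.length_cons, List.length_replicate] at hi
    rcases i with _ | i
    · rwa [List.getElem_cons_zero]
    · have := hrow (i + 1) (by omega)
      have : (i + 1, 1) ∉ μ := fun hc => absurd (mem_iff_lt_colLen.1 hc) (by omega)
      rw [mem_iff_lt_rowLen] at this
      rw [List.getElem_cons_succ, List.getElem_replicate]
      omega

def fill (μ : YoungDiagram) (v : ℕ → ℕ → ℕ) (p : ℕ × ℕ) : ℕ :=
  if p ∈ μ then v p.1 p.2 else 0

theorem fill_of_mem {μ : YoungDiagram} {v : ℕ → ℕ → ℕ} {i j : ℕ} (h : (i, j) ∈ μ) :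
    μ.fill v (i, j) = v i j :=
  if_pos h

theorem isSYT_transpose {μ : YoungDiagram} {f : ℕ × ℕ → ℕ} (hf : IsSYT μ f) :
    IsSYT μ.transpose (f ∘ Prod.swap) := by
  obtain ⟨hbij, hzero, hrow, hcol⟩ := hf
  have hswap : Set.BijOn Prod.swap (μ.transpose.cells : Set (ℕ × ℕ)) μ.cells :=
    ⟨fun c hc => by simpa using hc, Prod.swap_injective.injOn,
      fun c hc => ⟨c.swap, by simpa using hc, c.swap_swap⟩⟩
  refine ⟨by simpa [card_transpose] using hbij.comp hswap,
    fun p hp => hzero _ (by simpa using hp), fun p q hp hq h1 h2 => ?_,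
    fun p q hp hq h1 h2 => ?_⟩
  · exact hcol p.swap q.swap (by simpa using hp) (by simpa using hq) h1 h2
  · exact hrow p.swap q.swap (by simpa using hp) (by simpa using hq) h1 h2

@[simp]
theorem sytCount_transpose (μ : YoungDiagram) : sytCount μ.transpose = sytCount μ :=
  Nat.card_congr
    { toFun := fun f => ⟨f.1 ∘ Prod.swap, by simpa using isSYT_transpose f.2⟩
      invFun := fun f => ⟨f.1 ∘ Prod.swap, isSYT_transpose f.2⟩
      left_inv := fun f => by ext; simp
      right_inv := fun f => by ext; simp }

instance (μ : YoungDiagram) : Finite {f : ℕ × ℕ → ℕ // IsSYT μ f} := by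
  refine Finite.of_injective
    (fun f c => (⟨f.1 c.1, f.2.1.mapsTo c.2⟩ : Set.Icc 1 μ.card) : _ → μ.cells → _) ?_
  rintro ⟨f, hf⟩ ⟨g, hg⟩ h
  refine Subtype.ext (funext fun p => ?_)
  by_cases hp : p ∈ μ
  · simpa using congrFun h ⟨p, hp⟩
  · exact (hf.2.1 p hp).trans (hg.2.1 p hp).symm

theorem card_le_sytCount {μ : YoungDiagram} {ι : Type*} {s : Finset ι}
    {F : ι → ℕ × ℕ → ℕ} (hF : ∀ x ∈ s, IsSYT μ (F x)) (hinj : Set.InjOn F s) :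
    s.card ≤ sytCount μ := by
  rw [← Nat.card_eq_finsetCard]
  exact Nat.card_le_card_of_injective (fun x => ⟨F x, hF x x.2⟩)
    fun x y h => Subtype.ext (hinj x.2 y.2 (congrArg Subtype.val h))

theorem isSYT_fill {μ : YoungDiagram} {v : ℕ → ℕ → ℕ}
    (hmem : ∀ i j, (i, j) ∈ μ → v i j ∈ Set.Icc 1 μ.card)
    (hrow : ∀ i j j', (i, j') ∈ μ → j < j' → v i j < v i j')
    (hcol : ∀ i i' j, (i', j) ∈ μ → i < i' → v i j < v i' j)
    (hne : ∀ i j i' j', (i, j) ∈ μ → (i', j') ∈ μ → i < i' → v i j ≠ v i' j') :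
    IsSYT μ (μ.fill v) := by
  set f := μ.fill v
  have hf : ∀ p ∈ μ, f p = v p.1 p.2 := fun p hp => if_pos hp
  have hmaps : Set.MapsTo f μ.cells (Set.Icc 1 μ.card) := fun p hp => by
    rw [hf p hp]; exact hmem _ _ hp
  have hinj : Set.InjOn f μ.cells := by
    rintro ⟨i, j⟩ hp ⟨i', j'⟩ hq hpq
    simp only [mem_coe, mem_cells] at hp hq
    rw [hf _ hp, hf _ hq] at hpq
    rcases lt_trichotomy i i' with hi | rfl | hi
    · exact absurd hpq (hne _ _ _ _ hp hq hi)
    · rcases lt_trichotomy j j' with hj | rfl | hj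
      · exact absurd hpq (hrow _ _ _ hq hj).ne
      · rfl
      · exact absurd hpq (hrow _ _ _ hp hj).ne'
    · exact absurd hpq.symm (hne _ _ _ _ hq hp hi)
  refine ⟨⟨hmaps, hinj, ?_⟩, fun p hp => if_neg hp, ?_, ?_⟩
  · rw [← coe_Icc]
    exact surjOn_of_injOn_of_card_le f (by rwa [coe_Icc]) hinj (by simp [YoungDiagram.card])
  · rintro ⟨i, j⟩ ⟨i', j'⟩ hp hq (rfl : i = i') (hj : j < j')
    rw [hf _ hp, hf _ hq]
    exact hrow _ _ _ hq hj
  · rintro ⟨i, j⟩ ⟨i', j'⟩ hp hq (rfl : j = j') (hi : i < i')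
    rw [hf _ hp, hf _ hq]
    exact hcol _ _ _ hq hi

def rowOffset (μ : YoungDiagram) (i : ℕ) : ℕ := ∑ i' ∈ range i, μ.rowLen i'

theorem rowOffset_add_lt {μ : YoungDiagram} {i i' j : ℕ} (h : (i, j) ∈ μ) (hi : i < i') :
    μ.rowOffset i + j < μ.rowOffset i' :=
  sum_range_add_lt_sum_range _ (mem_iff_lt_rowLen.1 h) hi

theorem rowOffset_mono (μ : YoungDiagram) : Monotone μ.rowOffset := fun _ _ h =>
  sum_le_sum_of_subset (range_subset_range.2 h)

theorem rowOffset_le_card (μ : YoungDiagram) (i : ℕ) : μ.rowOffset i ≤ μ.card := by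
  rw [← μ.sum_rowLen_eq_card]
  refine sum_le_sum_of_ne_zero fun i' _ hi' => mem_range.2 (mem_iff_lt_colLen.1 ?_)
  exact mem_iff_lt_rowLen.2 (Nat.pos_of_ne_zero hi')

theorem rowOffset_two (μ : YoungDiagram) : μ.rowOffset 2 = μ.rowLen 0 + μ.rowLen 1 := by
  simp [rowOffset, sum_range_succ]

/-- The entries of the `2 × rowLen 1` block at the top left are `1, …, 2 * rowLen 1`, filled
column by column, except that for `j ∈ E` the entries `2j` and `2j + 1` of the cells `(1, j - 1)`
and `(0, j)` are exchanged; the rest of the diagram is then filled row by row. -/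
def twoRowValue (μ : YoungDiagram) (E : Finset ℕ) : ℕ → ℕ → ℕ
  | 0, j => if j ∈ E then 2 * j else if j < μ.rowLen 1 then 2 * j + 1 else μ.rowLen 1 + j + 1
  | 1, j => if j + 1 ∈ E then 2 * j + 3 else 2 * j + 2
  | i + 2, j => μ.rowOffset (i + 2) + j + 1

section TwoRows

variable {μ : YoungDiagram} {E : Finset ℕ}

theorem twoRowValue_le_rowOffset_two (hE : E ⊆ Icc 1 (μ.rowLen 1 - 1)) {i j : ℕ}
    (h : (i, j) ∈ μ) (hi : i < 2) : μ.twoRowValue E i j ≤ μ.rowOffset 2 := by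
  have hj := mem_iff_lt_rowLen.1 h
  have hk := μ.rowLen_anti 0 1 zero_le_one
  rw [rowOffset_two]
  obtain rfl | rfl : i = 0 ∨ i = 1 := by omega
  all_goals simp only [twoRowValue]; grind

theorem twoRowValue_lt_of_two_le (hE : E ⊆ Icc 1 (μ.rowLen 1 - 1)) {i i' j j' : ℕ}
    (h : (i, j) ∈ μ) (h' : (i', j') ∈ μ) (hi : i < i') (hi' : 2 ≤ i') :
    μ.twoRowValue E i j < μ.twoRowValue E i' j' := by
  obtain ⟨i', rfl⟩ : ∃ m, i' = m + 2 := ⟨i' - 2, by omega⟩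
  show _ < μ.rowOffset (i' + 2) + j' + 1
  rcases lt_or_ge i 2 with hi2 | hi2
  · have := twoRowValue_le_rowOffset_two hE h hi2
    have := μ.rowOffset_mono (show 2 ≤ i' + 2 by omega)
    omega
  · obtain ⟨i, rfl⟩ : ∃ m, i = m + 2 := ⟨i - 2, by omega⟩
    have := rowOffset_add_lt h hi
    simp only [twoRowValue]
    omega

theorem isSYT_fill_twoRowValue (hE : E ⊆ Icc 1 (μ.rowLen 1 - 1)) :
    IsSYT μ (μ.fill (μ.twoRowValue E)) := by
  have hk := μ.rowLen_anti 0 1 zero_le_one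
  apply isSYT_fill
  · intro i j h
    rcases lt_or_ge i 2 with hi | hi
    · refine ⟨?_, (twoRowValue_le_rowOffset_two hE h hi).trans (μ.rowOffset_le_card 2)⟩
      obtain rfl | rfl : i = 0 ∨ i = 1 := by omega
      all_goals simp only [twoRowValue]; grind
    · obtain ⟨i, rfl⟩ : ∃ m, i = m + 2 := ⟨i - 2, by omega⟩
      have := rowOffset_add_lt h (lt_add_one (i + 2))
      have := μ.rowOffset_le_card (i + 2 + 1)
      simp only [twoRowValue, Set.mem_Icc]
      omega
  · intro i j j' h hj
    have := mem_iff_lt_rowLen.1 h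
    rcases i with _ | _ | i
    all_goals simp only [twoRowValue]; grind
  · intro i i' j h' hi
    rcases lt_or_ge i' 2 with hi' | hi'
    · obtain ⟨rfl, rfl⟩ : i = 0 ∧ i' = 1 := by omega
      have := mem_iff_lt_rowLen.1 h'
      simp only [twoRowValue]; grind
    · exact twoRowValue_lt_of_two_le hE (μ.up_left_mem hi.le le_rfl h') h' hi hi'
  · intro i j i' j' h h' hi
    rcases lt_or_ge i' 2 with hi' | hi'
    · obtain ⟨rfl, rfl⟩ : i = 0 ∧ i' = 1 := by omega
      have := mem_iff_lt_rowLen.1 h'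
      simp only [twoRowValue]; grind
    · exact (twoRowValue_lt_of_two_le hE h h' hi hi').ne

end TwoRows

theorem two_pow_rowLen_one_le_sytCount (μ : YoungDiagram) :
    2 ^ (μ.rowLen 1 - 1) ≤ sytCount μ := by
  have hk := μ.rowLen_anti 0 1 zero_le_one
  have hinj : Set.InjOn (fun E => μ.fill (μ.twoRowValue E))
      ((Icc 1 (μ.rowLen 1 - 1)).powerset : Set (Finset ℕ)) := by
    intro E hE E' hE' h
    simp only [coe_powerset, Set.mem_preimage, Set.mem_powerset_iff, coe_subset] at hE hE'
    ext j
    by_cases hj : j ∈ Icc 1 (μ.rowLen 1 - 1)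
    · rw [mem_Icc] at hj
      have hcell : (0, j) ∈ μ := mem_iff_lt_rowLen.2 (by omega)
      have := congrFun h (0, j)
      simp only [fill_of_mem hcell, twoRowValue] at this
      split_ifs at this <;> grind
    · exact iff_of_false (fun h => hj (hE h)) (fun h => hj (hE' h))
  simpa using card_le_sytCount (fun E hE => isSYT_fill_twoRowValue (mem_powerset.1 hE)) hinj

def armOffset (μ : YoungDiagram) (i : ℕ) : ℕ := ∑ i' ∈ range i, (μ.rowLen i' - 1)

theorem armOffset_add_lt {μ : YoungDiagram} {i i' j : ℕ} (h : (i, j + 1) ∈ μ) (hi : i < i') :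
    μ.armOffset i + j < μ.armOffset i' :=
  sum_range_add_lt_sum_range _ (by have := mem_iff_lt_rowLen.1 h; omega) hi

theorem armOffset_colLen_zero_add (μ : YoungDiagram) :
    μ.armOffset (μ.colLen 0) + μ.colLen 0 = μ.card := by
  calc μ.armOffset (μ.colLen 0) + μ.colLen 0
      = ∑ i ∈ range (μ.colLen 0), (μ.rowLen i - 1 + 1) := by
        rw [sum_add_distrib, sum_const, card_range, smul_eq_mul, mul_one, armOffset]
    _ = μ.card := by
        rw [← μ.sum_rowLen_eq_card]
        refine sum_congr rfl fun i hi => ?_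
        have := mem_iff_lt_rowLen.1 (mem_iff_lt_colLen.2 (mem_range.1 hi))
        omega

/-- Below the rows of length at least two, the first column takes the elements of `Y`; the
cell `(i, j + 1)` has position `μ.armOffset i + j` among the cells outside the first column read
row by row, and these take the complement of `Y` in `(colLen 1, card]` in that order. -/
noncomputable def tailValue (μ : YoungDiagram) (Y : Finset ℕ) : ℕ → ℕ → ℕ
  | i, 0 => if i < μ.colLen 1 then i + 1 else Nat.nth (· ∈ Y) (i - μ.colLen 1)
  | i, j + 1 => Nat.nth (· ∈ Ioc (μ.colLen 1) μ.card \ Y) (μ.armOffset i + j)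

section Tail

variable {μ : YoungDiagram} {Y : Finset ℕ}

theorem tailValue_zero_of_lt {i : ℕ} (hi : i < μ.colLen 1) : μ.tailValue Y i 0 = i + 1 :=
  if_pos hi

theorem tailValue_zero_mem (hY : Y.card = μ.colLen 0 - μ.colLen 1) {i : ℕ}
    (hl : μ.colLen 1 ≤ i) (hb : i < μ.colLen 0) : μ.tailValue Y i 0 ∈ Y := by
  rw [tailValue, if_neg (by omega)]
  exact Y.nth_mem_of_lt_card (by omega)

theorem card_compl_tail (hYs : Y ⊆ Ioc (μ.colLen 1) μ.card)
    (hY : Y.card = μ.colLen 0 - μ.colLen 1) :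
    (Ioc (μ.colLen 1) μ.card \ Y).card = μ.armOffset (μ.colLen 0) := by
  have := μ.armOffset_colLen_zero_add
  have := μ.colLen_anti 0 1 zero_le_one
  rw [card_sdiff_of_subset hYs, Nat.card_Ioc, hY]
  omega

theorem tailValue_succ_lt (hYs : Y ⊆ Ioc (μ.colLen 1) μ.card)
    (hY : Y.card = μ.colLen 0 - μ.colLen 1) {i i' j j' : ℕ} (h' : (i', j' + 1) ∈ μ)
    (hlt : μ.armOffset i + j < μ.armOffset i' + j') :
    μ.tailValue Y i (j + 1) < μ.tailValue Y i' (j' + 1) := by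
  refine nth_lt_nth_of_lt_card _ hlt ?_
  rw [card_compl_tail hYs hY]
  exact armOffset_add_lt h' (mem_iff_lt_colLen.1 (μ.up_left_mem le_rfl (Nat.zero_le _) h'))

theorem tailValue_succ_mem (hYs : Y ⊆ Ioc (μ.colLen 1) μ.card)
    (hY : Y.card = μ.colLen 0 - μ.colLen 1) {i j : ℕ} (h : (i, j + 1) ∈ μ) :
    μ.tailValue Y i (j + 1) ∈ Ioc (μ.colLen 1) μ.card \ Y := by
  refine nth_mem_of_lt_card _ ?_
  rw [card_compl_tail hYs hY]
  exact armOffset_add_lt h (mem_iff_lt_colLen.1 (μ.up_left_mem le_rfl (Nat.zero_le _) h))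

theorem tailValue_zero_lt_succ (hYs : Y ⊆ Ioc (μ.colLen 1) μ.card)
    (hY : Y.card = μ.colLen 0 - μ.colLen 1) {i i' j' : ℕ} (hi : i < μ.colLen 1)
    (h' : (i', j' + 1) ∈ μ) : μ.tailValue Y i 0 < μ.tailValue Y i' (j' + 1) := by
  have := mem_Ioc.1 (mem_sdiff.1 (tailValue_succ_mem hYs hY h')).1
  rw [tailValue_zero_of_lt hi]
  omega

theorem tailValue_zero_lt_zero (hYs : Y ⊆ Ioc (μ.colLen 1) μ.card)
    (hY : Y.card = μ.colLen 0 - μ.colLen 1) {i i' : ℕ} (hi : i < i') (hb : i' < μ.colLen 0) :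
    μ.tailValue Y i 0 < μ.tailValue Y i' 0 := by
  by_cases hi' : i' < μ.colLen 1
  · rw [tailValue_zero_of_lt hi', tailValue_zero_of_lt (hi.trans hi')]
    omega
  have := mem_Ioc.1 (hYs (tailValue_zero_mem hY (not_lt.1 hi') hb))
  by_cases hil : i < μ.colLen 1
  · rw [tailValue_zero_of_lt hil]
    omega
  rw [tailValue, tailValue, if_neg hil, if_neg hi']
  exact Y.nth_lt_nth_of_lt_card (by omega) (by omega)

theorem tailValue_zero_ne_succ (hYs : Y ⊆ Ioc (μ.colLen 1) μ.card)
    (hY : Y.card = μ.colLen 0 - μ.colLen 1) {i i' j' : ℕ} (h : (i, 0) ∈ μ)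
    (h' : (i', j' + 1) ∈ μ) : μ.tailValue Y i 0 ≠ μ.tailValue Y i' (j' + 1) := by
  by_cases hi : i < μ.colLen 1
  · exact (tailValue_zero_lt_succ hYs hY hi h').ne
  · have := tailValue_zero_mem hY (not_lt.1 hi) (mem_iff_lt_colLen.1 h)
    exact fun heq => (mem_sdiff.1 (tailValue_succ_mem hYs hY h')).2 (heq ▸ this)

theorem isSYT_fill_tailValue (hYs : Y ⊆ Ioc (μ.colLen 1) μ.card)
    (hY : Y.card = μ.colLen 0 - μ.colLen 1) : IsSYT μ (μ.fill (μ.tailValue Y)) := by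
  have hbn : μ.colLen 0 ≤ μ.card := μ.armOffset_colLen_zero_add ▸ Nat.le_add_left _ _
  apply isSYT_fill
  · rintro i (_ | j) h
    · by_cases hi : i < μ.colLen 1
      · rw [tailValue_zero_of_lt hi, Set.mem_Icc]
        have := μ.colLen_anti 0 1 zero_le_one
        omega
      · have := mem_Ioc.1 (hYs (tailValue_zero_mem hY (not_lt.1 hi) (mem_iff_lt_colLen.1 h)))
        rw [Set.mem_Icc]
        omega
    · have := mem_Ioc.1 (mem_sdiff.1 (tailValue_succ_mem hYs hY h)).1
      rw [Set.mem_Icc]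
      omega
  · rintro i j (_ | j') h' hj
    · omega
    rcases j with _ | j
    · exact tailValue_zero_lt_succ hYs hY
        (mem_iff_lt_colLen.1 (μ.up_left_mem le_rfl (by omega) h')) h'
    · exact tailValue_succ_lt hYs hY h' (by omega)
  · rintro i i' (_ | j) h' hi
    · exact tailValue_zero_lt_zero hYs hY hi (mem_iff_lt_colLen.1 h')
    · exact tailValue_succ_lt hYs hY h'
        ((armOffset_add_lt (μ.up_left_mem hi.le le_rfl h') hi).trans_le le_self_add)
  · rintro i (_ | j) i' (_ | j') h h' hi
    · exact (tailValue_zero_lt_zero hYs hY hi (mem_iff_lt_colLen.1 h')).ne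
    · exact tailValue_zero_ne_succ hYs hY h h'
    · exact (tailValue_zero_ne_succ hYs hY h' h).symm
    · exact (tailValue_succ_lt hYs hY h'
        ((armOffset_add_lt h hi).trans_le le_self_add)).ne

end Tail

theorem choose_le_sytCount (μ : YoungDiagram) :
    (μ.card - μ.colLen 1).choose (μ.colLen 0 - μ.colLen 1) ≤ sytCount μ := by
  set s := (Ioc (μ.colLen 1) μ.card).powersetCard (μ.colLen 0 - μ.colLen 1)
  have hs : ∀ Y ∈ s, Y ⊆ Ioc (μ.colLen 1) μ.card ∧ Y.card = μ.colLen 0 - μ.colLen 1 :=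
    fun Y hY => mem_powersetCard.1 hY
  have himage : ∀ Y ∈ s,
      (Ico (μ.colLen 1) (μ.colLen 0)).image (fun i => μ.fill (μ.tailValue Y) (i, 0)) = Y := by
    intro Y hY
    obtain ⟨hYs, hY⟩ := hs Y hY
    ext y
    simp only [mem_image, mem_Ico]
    constructor
    · rintro ⟨i, ⟨hl, hb⟩, rfl⟩
      rw [fill_of_mem (mem_iff_lt_colLen.2 hb)]
      exact tailValue_zero_mem hY hl hb
    · intro hy
      obtain ⟨m, hm, rfl⟩ := exists_lt_card_nth_eq hy
      refine ⟨μ.colLen 1 + m, ⟨by omega, by omega⟩, ?_⟩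
      rw [fill_of_mem (mem_iff_lt_colLen.2 (by omega)), tailValue, if_neg (by omega),
        Nat.add_sub_cancel_left]
  have hinj : Set.InjOn (fun Y => μ.fill (μ.tailValue Y)) s := fun Y hY Y' hY' h => by
    rw [← himage Y hY, ← himage Y' hY']
    simp only at h
    rw [h]
  simpa [s, Nat.card_Ioc] using
    card_le_sytCount (fun Y hY => isSYT_fill_tailValue (hs Y hY).1 (hs Y hY).2) hinj

theorem sq_card_lt_sytCount_of_le_rowLen_one (μ : YoungDiagram)
    (h : 2 * Nat.log 2 μ.card + 4 ≤ μ.rowLen 1) : μ.card ^ 2 < sytCount μ :=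
  calc μ.card ^ 2 < 2 ^ (2 * Nat.log 2 μ.card + 2) := Nat.sq_lt_two_pow_two_mul_log_add_two _
    _ ≤ 2 ^ (μ.rowLen 1 - 1) := Nat.pow_le_pow_right two_pos (by omega)
    _ ≤ sytCount μ := μ.two_pow_rowLen_one_le_sytCount

theorem sq_card_lt_sytCount_of_card_le_sq (μ : YoungDiagram) (hn : 400 ≤ μ.card)
    (h : μ.card ≤ (μ.rowLen 1 + 1) ^ 2) : μ.card ^ 2 < sytCount μ := by
  have hk : 18 ≤ μ.rowLen 1 := by nlinarith
  calc μ.card ^ 2 ≤ ((μ.rowLen 1 + 1) ^ 2) ^ 2 := Nat.pow_le_pow_left h 2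
    _ = (μ.rowLen 1 + 1) ^ 4 := by ring
    _ < 2 ^ (μ.rowLen 1 - 1) := Nat.add_one_pow_four_lt_two_pow hk
    _ ≤ sytCount μ := μ.two_pow_rowLen_one_le_sytCount

theorem sq_card_lt_three_mul_sytCount_of_colLen_one_lt (μ : YoungDiagram) (hn : 400 ≤ μ.card)
    (hl : μ.colLen 1 < 2 * Nat.log 2 μ.card + 4) (hgap : μ.colLen 1 + 2 ≤ μ.colLen 0)
    (hb : μ.colLen 0 + 2 ≤ μ.card) : μ.card ^ 2 < 3 * sytCount μ :=
  calc μ.card ^ 2 < 3 * (μ.card - (2 * Nat.log 2 μ.card + 4)).choose 2 :=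
        Nat.sq_lt_three_mul_choose_two hn
    _ ≤ 3 * (μ.card - μ.colLen 1).choose 2 := by gcongr
    _ ≤ 3 * (μ.card - μ.colLen 1).choose (μ.colLen 0 - μ.colLen 1) := by
        gcongr
        exact Nat.choose_le_choose_of_le_of_add_le (by omega) (by omega)
    _ ≤ 3 * sytCount μ := by gcongr; exact μ.choose_le_sytCount

theorem sq_card_lt_three_mul_sytCount (μ : YoungDiagram) (hn : 400 ≤ μ.card)
    (ha : μ.rowLen 0 + 2 ≤ μ.card) (hb : μ.colLen 0 + 2 ≤ μ.card) :
    μ.card ^ 2 < 3 * sytCount μ := by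
  by_cases hk : 2 * Nat.log 2 μ.card + 4 ≤ μ.rowLen 1
  · have := μ.sq_card_lt_sytCount_of_le_rowLen_one hk
    omega
  by_cases hl : 2 * Nat.log 2 μ.card + 4 ≤ μ.colLen 1
  · have := μ.transpose.sq_card_lt_sytCount_of_le_rowLen_one (by simpa using hl)
    simp only [card_transpose, sytCount_transpose] at this
    omega
  by_cases hgap : μ.colLen 1 + 2 ≤ μ.colLen 0
  · exact μ.sq_card_lt_three_mul_sytCount_of_colLen_one_lt hn (by omega) hgap hb
  by_cases hgap' : μ.rowLen 1 + 2 ≤ μ.rowLen 0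
  · simpa using μ.transpose.sq_card_lt_three_mul_sytCount_of_colLen_one_lt (by simpa using hn)
      (by simpa using hk) (by simpa using hgap') (by simpa using ha)
  have hcard := μ.card_le_rowLen_mul_colLen
  rcases le_total (μ.colLen 0) (μ.rowLen 0) with hba | hab
  · have := μ.sq_card_lt_sytCount_of_card_le_sq hn (by nlinarith)
    omega
  · have := μ.transpose.sq_card_lt_sytCount_of_card_le_sq (by simpa using hn)
      (by simp only [card_transpose, rowLen_transpose]; nlinarith)
    simp only [card_transpose, sytCount_transpose] at this
    omega

end YoungDiagram

/-- For `n ≥ 400`, every irreducible representation of `S_n` has dimension `> n²/3`,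
except the trivial representation (the single-row partition `(n)`), the sign representation
(the single-column partition `(1^n)`), the standard representation (partition `(n-1,1)`),
and its conjugate (partition `(2,1^{n-2})`). Dimensions are counted as numbers of
standard Young tableaux. -/
theorem stmt5 (n : ℕ) (hn : 400 ≤ n) (μ : YoungDiagram) (hcard : μ.card = n)
    (h1 : μ.rowLens ≠ [n])
    (h2 : μ.rowLens ≠ List.replicate n 1)
    (h3 : μ.rowLens ≠ [n - 1, 1])
    (h4 : μ.rowLens ≠ 2 :: List.replicate (n - 2) 1) :
    (n ^ 2 : ℚ) / 3 < (sytCount μ : ℚ) := by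
  subst hcard
  have := μ.sq_card_lt_three_mul_sytCount hn (μ.rowLen_zero_add_two_le (by omega) h1 h3)
    (μ.colLen_zero_add_two_le h2 h4)
  rw [div_lt_iff₀ three_pos]
  exact_mod_cast (by omega : μ.card ^ 2 < sytCount μ * 3)
end

section
/- For all integers n ≥ 1: √(2π) · n^{n+1/2} · e^{−n + 1/(12n+1)} < n! < √(2π) · n^{n+1/2} · e^{−n + 1/(12n)}. -/
/-!
Put `δₙ = log (stirlingSeq n) - log √π`, so that `n! = √(2π) n^(n+1/2) e^(-n + δₙ)` and `δₙ → 0`.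
The increments `δₙ - δₙ₊₁` have the series expansion `∑_{k ≥ 1} r^k / (2k + 1)` with
`r = (2n + 1)⁻²`. Its first term alone beats `1/(12n+1) - 1/(12n+13)`, and bounding every term by
`r^k / 3` (strictly from `k = 2` on) gives `1/(12n) - 1/(12(n+1))`. Hence `δₙ - 1/(12n)` strictly
increases and `δₙ - 1/(12n+1)` strictly decreases, both to `0`.
-/

open Real Filter Topology
open scoped Nat

theorem StrictMono.lt_of_tendsto {α : Type*} [TopologicalSpace α] [Preorder α]
    [OrderClosedTopology α] {f : ℕ → α} {a : α} (hf : StrictMono f)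
    (ha : Tendsto f atTop (𝓝 a)) (n : ℕ) : f n < a :=
  (hf n.lt_succ_self).trans_le (hf.monotone.ge_of_tendsto ha _)

theorem StrictAnti.lt_of_tendsto {α : Type*} [TopologicalSpace α] [Preorder α]
    [OrderClosedTopology α] {f : ℕ → α} {a : α} (hf : StrictAnti f)
    (ha : Tendsto f atTop (𝓝 a)) (n : ℕ) : a < f n :=
  (hf.antitone.le_of_tendsto ha _).trans_lt (hf n.lt_succ_self)

namespace Stirling

theorem factorial_eq_sqrt_two_pi_mul_exp {n : ℕ} (hn : n ≠ 0) :
    (n ! : ℝ) = √(2 * π) * (n : ℝ) ^ ((n : ℝ) + 1 / 2) *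
      exp (-(n : ℝ) + (log (stirlingSeq n) - log √π)) := by
  have hn0 : (0 : ℝ) < n := by positivity
  have hs : 0 < stirlingSeq n := by
    obtain ⟨m, rfl⟩ := Nat.exists_eq_succ_of_ne_zero hn
    exact stirlingSeq'_pos m
  rw [exp_add, exp_sub, exp_log hs, exp_log (by positivity), stirlingSeq, rpow_add hn0,
    rpow_natCast, ← sqrt_eq_rpow, sqrt_mul (by norm_num), sqrt_mul (by norm_num), div_pow,
    ← exp_nat_mul, mul_one, exp_neg]
  field_simp

theorem tendsto_log_stirlingSeq_succ :
    Tendsto (fun n : ℕ ↦ log (stirlingSeq (n + 1))) atTop (𝓝 (log √π)) :=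
  (tendsto_stirlingSeq_sqrt_pi.comp (tendsto_add_atTop_nat 1)).log (by positivity)

theorem log_stirlingSeq_sdiff_lt (n : ℕ) :
    log (stirlingSeq (n + 1)) - log (stirlingSeq (n + 2)) <
      1 / (12 * (n + 1 : ℝ)) - 1 / (12 * (n + 2 : ℝ)) := by
  set r := ((1 : ℝ) / (2 * (n + 1 : ℕ) + 1)) ^ 2 with hr
  have hr0 : 0 < r := by positivity
  have hr1 : r < 1 := by grw [hr, ← n.zero_le]; norm_num
  have hgeom := ((hasSum_geometric_of_lt_one hr0.le hr1).mul_left r).div_const 3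
  simp only [← pow_succ'] at hgeom
  have hval : r * (1 - r)⁻¹ / 3 = 1 / (12 * (n + 1 : ℝ)) - 1 / (12 * (n + 2 : ℝ)) := by
    have h1r : 1 - r = 4 * (n + 1 : ℝ) * (n + 2) / (2 * n + 3) ^ 2 := by
      rw [hr]; push_cast; field_simp; ring
    rw [h1r, hr]; push_cast; field_simp; ring
  rw [← hval]
  refine hasSum_lt (i := 1) (fun j ↦ ?_) ?_ (log_stirlingSeq_sdiff_hasSum n) hgeom
  · have : (3 : ℝ) ≤ 2 * (j + 1 : ℕ) + 1 := by push_cast; linarith [j.cast_nonneg (α := ℝ)]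
    dsimp only
    rw [one_div_mul_eq_div]
    gcongr
  · change 1 / (2 * ((1 + 1 : ℕ) : ℝ) + 1) * r ^ (1 + 1) < r ^ (1 + 1) / 3
    norm_num
    nlinarith [pow_pos hr0 2]

theorem log_stirlingSeq_sdiff_gt (n : ℕ) :
    1 / (12 * (n + 1 : ℝ) + 1) - 1 / (12 * (n + 2 : ℝ) + 1) <
      log (stirlingSeq (n + 1)) - log (stirlingSeq (n + 2)) := by
  have hfirst := lt_hasSum (log_stirlingSeq_sdiff_hasSum n) 0 (fun j _ ↦ by positivity) 1
    one_ne_zero (by positivity)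
  refine lt_trans ?_ hfirst
  norm_num
  field_simp
  nlinarith

theorem log_stirlingSeq_sub_log_sqrt_pi_lt (n : ℕ) :
    log (stirlingSeq (n + 1)) - log √π < 1 / (12 * (n + 1 : ℝ)) := by
  have hmono : StrictMono fun m : ℕ ↦ log (stirlingSeq (m + 1)) - 1 / (12 * (m + 1 : ℝ)) :=
    strictMono_nat_of_lt_succ fun m ↦ by
      have := log_stirlingSeq_sdiff_lt m
      push_cast [add_assoc, one_add_one_eq_two] at this ⊢
      linarith
  have hlim : Tendsto (fun m : ℕ ↦ log (stirlingSeq (m + 1)) - 1 / (12 * (m + 1 : ℝ))) atTop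
      (𝓝 (log √π)) := by
    have hden : Tendsto (fun m : ℕ ↦ 12 * (m + 1 : ℝ)) atTop atTop :=
      (tendsto_natCast_atTop_atTop.atTop_add tendsto_const_nhds).const_mul_atTop (by norm_num)
    simpa using
      tendsto_log_stirlingSeq_succ.sub ((tendsto_const_nhds (x := (1 : ℝ))).div_atTop hden)
  linarith [hmono.lt_of_tendsto hlim n]

theorem lt_log_stirlingSeq_sub_log_sqrt_pi (n : ℕ) :
    1 / (12 * (n + 1 : ℝ) + 1) < log (stirlingSeq (n + 1)) - log √π := by
  have hanti : StrictAnti fun m : ℕ ↦ log (stirlingSeq (m + 1)) - 1 / (12 * (m + 1 : ℝ) + 1) :=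
    strictAnti_nat_of_succ_lt fun m ↦ by
      have := log_stirlingSeq_sdiff_gt m
      push_cast [add_assoc, one_add_one_eq_two] at this ⊢
      linarith
  have hlim : Tendsto (fun m : ℕ ↦ log (stirlingSeq (m + 1)) - 1 / (12 * (m + 1 : ℝ) + 1))
      atTop (𝓝 (log √π)) := by
    have hden : Tendsto (fun m : ℕ ↦ 12 * (m + 1 : ℝ) + 1) atTop atTop :=
      tendsto_atTop_add_const_right _ _ <|
        (tendsto_natCast_atTop_atTop.atTop_add tendsto_const_nhds).const_mul_atTop (by norm_num)
    simpa using
      tendsto_log_stirlingSeq_succ.sub ((tendsto_const_nhds (x := (1 : ℝ))).div_atTop hden)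
  linarith [hanti.lt_of_tendsto hlim n]

end Stirling

/-- Robbins' refinement of Stirling's formula: for every integer `n ≥ 1`,
`√(2π)·n^{n+1/2}·e^{-n+1/(12n+1)} < n! < √(2π)·n^{n+1/2}·e^{-n+1/(12n)}`. -/
theorem stmt8 (n : ℕ) (hn : 1 ≤ n) :
    Real.sqrt (2 * π) * (n : ℝ) ^ ((n : ℝ) + 1 / 2) *
        Real.exp (-(n : ℝ) + 1 / (12 * (n : ℝ) + 1)) < (Nat.factorial n : ℝ) ∧
      (Nat.factorial n : ℝ) < Real.sqrt (2 * π) * (n : ℝ) ^ ((n : ℝ) + 1 / 2) *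
        Real.exp (-(n : ℝ) + 1 / (12 * (n : ℝ))) := by
  obtain ⟨m, rfl⟩ := Nat.exists_eq_add_of_le' hn
  have hlower := Stirling.lt_log_stirlingSeq_sub_log_sqrt_pi m
  have hupper := Stirling.log_stirlingSeq_sub_log_sqrt_pi_lt m
  rw [Stirling.factorial_eq_sqrt_two_pi_mul_exp m.succ_ne_zero]
  push_cast
  constructor <;> gcongr
end

section
/- Let n ≥ 400, n = rm with r ≥ 4, and let ρ be an irreducible representation of S_n with d_ρ ≥ n²/3 satisfying the Fomin–Lulov bound |χ_ρ([r^m])| ≤ m! r^m / (rm)!^{1/r} · d_ρ^{1/r}. Then |χ_ρ([r^m])| / d_ρ ≤ 3/n. -/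
/-!
Raising to the `r`-th power, and using `d ≥ n²/3` in `d ^ (1/r - 1)` (a negative exponent), reduces
the claim to `m!^r r^n / n! ≤ 3 n^r / n²` with `n = rm`. Stirling's bounds `2√n (n/e)^n ≤ n!` and
`m! ≤ e√m (m/e)^m` bound the left side by `(e√m)^r / (2√n)`, since `(m/e)^(mr) r^n = (n/e)^n`.
As `r ≥ 4`, `√m ≤ √n / 2`, which leaves an elementary inequality in `√n ≥ 2`.
-/

open Real Nat

theorem Real.sqrt_four_mul (x : ℝ) : √(4 * x) = 2 * √x := by
  rw [sqrt_mul zero_le_four, show (4 : ℝ) = 2 ^ 2 by norm_num, sqrt_sq zero_le_two]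

namespace Stirling

theorem factorial_le_exp_one_mul_sqrt {n : ℕ} (hn : n ≠ 0) :
    (n ! : ℝ) ≤ exp 1 * √n * (n / exp 1) ^ n := by
  have hseq : stirlingSeq n ≤ exp 1 / √2 := by
    obtain ⟨k, rfl⟩ := exists_eq_succ_of_ne_zero hn
    simpa using stirlingSeq'_antitone (zero_le k)
  have hpos : 0 < √(2 * n) * (n / exp 1) ^ n := by
    have := pos_of_ne_zero hn
    positivity
  calc (n ! : ℝ) = stirlingSeq n * (√(2 * n) * (n / exp 1) ^ n) := by
        rw [stirlingSeq, div_mul_cancel₀ _ hpos.ne']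
    _ ≤ exp 1 / √2 * (√(2 * n) * (n / exp 1) ^ n) := by gcongr
    _ = exp 1 * √n * (n / exp 1) ^ n := by
        rw [sqrt_mul zero_le_two]
        field_simp

theorem two_mul_sqrt_le_factorial (n : ℕ) : 2 * √n * (n / exp 1) ^ n ≤ n ! := by
  refine le_trans ?_ (le_factorial_stirling n)
  rw [← sqrt_four_mul]
  gcongr
  nlinarith [pi_gt_three]

theorem factorial_pow_mul_pow_div_factorial_le {r m : ℕ} (hr : r ≠ 0) (hm : m ≠ 0) :
    (m ! : ℝ) ^ r * (r : ℝ) ^ (r * m) / (r * m)! ≤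
      (exp 1 * √m) ^ r / (2 * √(r * m : ℕ)) := by
  set n := r * m with hn
  have hpow : (((m : ℝ) / exp 1) ^ m) ^ r * (r : ℝ) ^ n = ((n : ℝ) / exp 1) ^ n := by
    rw [← pow_mul, mul_comm m r, ← mul_pow, hn]
    push_cast
    ring
  have hnum : (m ! : ℝ) ^ r * (r : ℝ) ^ n ≤ (exp 1 * √m) ^ r * ((n : ℝ) / exp 1) ^ n := by
    calc (m ! : ℝ) ^ r * (r : ℝ) ^ n ≤ (exp 1 * √m * (m / exp 1) ^ m) ^ r * (r : ℝ) ^ n := by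
          gcongr
          exact factorial_le_exp_one_mul_sqrt hm
      _ = (exp 1 * √m) ^ r * ((n : ℝ) / exp 1) ^ n := by rw [mul_pow, mul_assoc, hpow]
  have hA : 0 < ((n : ℝ) / exp 1) ^ n := by positivity
  calc (m ! : ℝ) ^ r * (r : ℝ) ^ n / n ! ≤
        (exp 1 * √m) ^ r * ((n : ℝ) / exp 1) ^ n / (2 * √n * ((n : ℝ) / exp 1) ^ n) := by
        gcongr
        exact two_mul_sqrt_le_factorial n
    _ = (exp 1 * √m) ^ r / (2 * √n) := mul_div_mul_right _ _ hA.ne'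

end Stirling

theorem exp_one_mul_half_pow_div_two_mul_le {x : ℝ} (hx : 2 ≤ x) {r : ℕ} (hr : 3 ≤ r) :
    (exp 1 * (x / 2)) ^ r / (2 * x) ≤ 3 * (x ^ 2) ^ r / (x ^ 2) ^ 2 := by
  obtain ⟨k, rfl⟩ := Nat.exists_eq_add_of_le' hr
  have he : exp 1 / 2 ≤ x := by linarith [exp_one_lt_three]
  have he3 : (exp 1 / 2) ^ 3 ≤ 6 := by
    calc (exp 1 / 2) ^ 3 ≤ (3 / 2) ^ 3 := by gcongr; exact exp_one_lt_three.le
      _ ≤ 6 := by norm_num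
  have hx0 : 0 < x := by linarith
  calc (exp 1 * (x / 2)) ^ (k + 3) / (2 * x)
        = (exp 1 / 2) ^ 3 * ((exp 1 / 2) ^ k * x ^ (k + 3)) / (2 * x) := by ring
    _ ≤ 6 * (x ^ k * x ^ (k + 3)) / (2 * x) := by gcongr
    _ = 3 * (x ^ 2) ^ (k + 3) / (x ^ 2) ^ 2 := by
        field_simp
        ring

theorem factorial_pow_mul_pow_div_factorial_le_three_mul {r m : ℕ} (hr : 4 ≤ r) (hm : m ≠ 0) :
    (m ! : ℝ) ^ r * (r : ℝ) ^ (r * m) / (r * m)! ≤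
      3 * ((r * m : ℕ) : ℝ) ^ r / ((r * m : ℕ) : ℝ) ^ 2 := by
  set n := r * m with hn
  have h4m : (4 * m : ℝ) ≤ n := by
    rw [hn]; push_cast; gcongr; exact_mod_cast hr
  have hsqrt_m : √m ≤ √n / 2 := by
    linarith [sqrt_le_sqrt h4m, sqrt_four_mul m]
  have hx : 2 ≤ √n := le_sqrt_of_sq_le (le_trans (by norm_cast; omega) h4m)
  calc (m ! : ℝ) ^ r * (r : ℝ) ^ n / n ! ≤ (exp 1 * √m) ^ r / (2 * √n) :=
        Stirling.factorial_pow_mul_pow_div_factorial_le (by omega) hm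
    _ ≤ (exp 1 * (√n / 2)) ^ r / (2 * √n) := by gcongr
    _ ≤ 3 * (√n ^ 2) ^ r / (√n ^ 2) ^ 2 := exp_one_mul_half_pow_div_two_mul_le hx (by omega)
    _ = 3 * (n : ℝ) ^ r / (n : ℝ) ^ 2 := by rw [sq_sqrt n.cast_nonneg]

theorem div_le_mul_rpow_sub_one_of_le_mul_rpow {x K C d p : ℝ} (hK : 0 ≤ K) (hC : 0 < C)
    (hCd : C ≤ d) (hp : p ≤ 1) (hx : x ≤ K * d ^ p) : x / d ≤ K * C ^ (p - 1) := by
  have hd : 0 < d := hC.trans_le hCd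
  calc x / d ≤ K * d ^ p / d := div_le_div_of_nonneg_right hx hd.le
    _ = K * d ^ (p - 1) := by rw [rpow_sub_one hd.ne', mul_div_assoc]
    _ ≤ K * C ^ (p - 1) :=
        mul_le_mul_of_nonneg_left (rpow_le_rpow_of_nonpos hC hCd (sub_nonpos.mpr hp)) hK

theorem div_rpow_mul_rpow_sub_one_le {r : ℕ} (hr : r ≠ 0) {a b N : ℝ} (ha : 0 ≤ a) (hb : 0 < b)
    (hN : 0 < N) (h : a ^ r / b ≤ 3 * N ^ r / N ^ 2) :
    a / b ^ (1 / r : ℝ) * (N ^ 2 / 3) ^ (1 / r - 1 : ℝ) ≤ 3 / N := by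
  set C := N ^ 2 / 3 with hC
  have hC0 : 0 < C := by positivity
  have hroot : ∀ {y : ℝ}, 0 ≤ y → (y ^ (1 / r : ℝ)) ^ r = y := fun hy ↦ by
    rw [one_div, rpow_inv_natCast_pow hy hr]
  refine (pow_le_pow_iff_left₀ (by positivity) (by positivity) hr).mp ?_
  calc (a / b ^ (1 / r : ℝ) * C ^ (1 / r - 1 : ℝ)) ^ r = a ^ r / b * (C / C ^ r) := by
        rw [rpow_sub_one hC0.ne', mul_pow, div_pow, div_pow, hroot hb.le, hroot hC0.le]
    _ ≤ 3 * N ^ r / N ^ 2 * (C / C ^ r) := by gcongr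
    _ = (3 / N) ^ r := by
        rw [hC, div_pow (N ^ 2), div_pow 3, ← pow_mul]
        field_simp
        ring

/-- Let `n ≥ 400`, `n = r·m` with `r ≥ 4`, and let `ρ` be an irreducible representation of
`S_n` with dimension `d ≥ n²/3` whose character value `χ` on the class `[r^m]` satisfies the
Fomin–Lulov bound. Then `|χ|/d ≤ 3/n`. -/
theorem stmt10 (n r m : ℕ) (hn : 400 ≤ n) (hnrm : n = r * m) (hr : 4 ≤ r)
    (χ d : ℝ) (hd : (n : ℝ) ^ 2 / 3 ≤ d)
    (hFL : |χ| ≤ (Nat.factorial m : ℝ) * (r : ℝ) ^ m /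
        ((Nat.factorial (r * m) : ℝ)) ^ (1 / (r : ℝ)) * d ^ (1 / (r : ℝ))) :
    |χ| / d ≤ 3 / (n : ℝ) := by
  subst hnrm
  have hm : m ≠ 0 := by rintro rfl; simp at hn
  have hn0 : (0 : ℝ) < (r * m : ℕ) := by norm_cast; omega
  have hp : 1 / (r : ℝ) ≤ 1 := div_le_one_of_le₀ (by norm_cast; omega) (by positivity)
  refine (div_le_mul_rpow_sub_one_of_le_mul_rpow (by positivity) (by positivity) hd hp hFL).trans
    ?_
  refine div_rpow_mul_rpow_sub_one_le (by omega) (by positivity) (by positivity) hn0 ?_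
  rw [mul_pow, ← pow_mul, mul_comm m r]
  exact factorial_pow_mul_pow_div_factorial_le_three_mul hr hm
end

section
/- Let n ≥ 400, n = rm with r ∈ {2,3}, and let ρ be an irreducible representation of S_n with d_ρ ≥ n²/3 satisfying the Fomin–Lulov bound |χ_ρ([r^m])| ≤ m! r^m / (rm)!^{1/r} · d_ρ^{1/r}. Then |χ_ρ([r^m])| / d_ρ ≤ 3/√n. -/
/-!
The Fomin–Lulov bound compares `|χ|` with `d^{1/r}` up to the factor `m! r^m / (rm)!^{1/r}`,
whose `r`-th power is the reciprocal of the multinomial coefficient `(rm)! / (m!)^r` times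
`r^{rm}`. Since `r^{rm}` is the sum of the at most `(rm + 1)^{r-1}` multinomial coefficients of `rm`
into `r` parts and the central one is the largest, this factor is at most `(rm + 1)^{(r-1)/r}`, so
`|χ|^r ≤ (n + 1)^{r-1} d`. Dividing by `d^r` and using `d ≥ n²/3` gives
`(|χ|/d)^r ≤ (3(n + 1)/n²)^{r-1}`, which for `r = 2, 3` is at most `(3/√n)^r`.
-/

open Nat Real

theorem factorial_sq_mul_four_pow_le (m : ℕ) : m ! ^ 2 * 4 ^ m ≤ (2 * m + 1) * (2 * m)! := by
  have hchoose : (2 * m).choose m * m ! * m ! = (2 * m)! := by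
    simpa [two_mul] using choose_mul_factorial_mul_factorial (n := 2 * m) (k := m) (by omega)
  calc m ! ^ 2 * 4 ^ m ≤ m ! ^ 2 * ((2 * m + 1) * (2 * m).choose m) :=
        Nat.mul_le_mul_left _ (four_pow_le_two_mul_add_one_mul_central_binom m)
    _ = (2 * m + 1) * (2 * m)! := by rw [← hchoose]; ring

theorem factorial_pow_three_mul_twentySeven_pow_le (m : ℕ) :
    m ! ^ 3 * 27 ^ m ≤ (3 * m + 1) ^ 2 * (3 * m)! := by
  induction m with
  | zero => simp
  | succ k ih =>
    have hfact : (3 * (k + 1))! = (3 * k + 3) * (3 * k + 2) * (3 * k + 1) * (3 * k)! := by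
      rw [show 3 * (k + 1) = 3 * k + 2 + 1 by ring, factorial_succ, factorial_succ,
        factorial_succ]
      ring
    have hstep : 27 * (k + 1) ^ 3 * (3 * k + 1) ^ 2 ≤
        (3 * k + 4) ^ 2 * ((3 * k + 3) * (3 * k + 2) * (3 * k + 1)) := by
      nlinarith
    calc (k + 1)! ^ 3 * 27 ^ (k + 1) = 27 * (k + 1) ^ 3 * (k ! ^ 3 * 27 ^ k) := by
          rw [factorial_succ]; ring
      _ ≤ 27 * (k + 1) ^ 3 * ((3 * k + 1) ^ 2 * (3 * k)!) := Nat.mul_le_mul_left _ ih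
      _ ≤ (3 * k + 4) ^ 2 * ((3 * k + 3) * (3 * k + 2) * (3 * k + 1)) * (3 * k)! := by
          rw [← mul_assoc]; exact Nat.mul_le_mul_right _ hstep
      _ = (3 * (k + 1) + 1) ^ 2 * (3 * (k + 1))! := by rw [hfact]; ring

theorem factorial_mul_pow_pow_le {r : ℕ} (hr : r = 2 ∨ r = 3) (m : ℕ) :
    (m ! * r ^ m) ^ r ≤ (r * m + 1) ^ (r - 1) * (r * m)! := by
  rcases hr with rfl | rfl
  · calc (m ! * 2 ^ m) ^ 2 = m ! ^ 2 * 4 ^ m := by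
          rw [mul_pow, ← pow_mul, mul_comm m 2, pow_mul]; norm_num
      _ ≤ _ := by simpa using factorial_sq_mul_four_pow_le m
  · calc (m ! * 3 ^ m) ^ 3 = m ! ^ 3 * 27 ^ m := by
          rw [mul_pow, ← pow_mul, mul_comm m 3, pow_mul]; norm_num
      _ ≤ _ := factorial_pow_three_mul_twentySeven_pow_le m

theorem pow_le_mul_of_le_div_rpow_mul_rpow {r : ℕ} (hr : r ≠ 0) {x A B N d : ℝ} (hN : 0 < N)
    (hd : 0 ≤ d) (hA : A ^ r ≤ B * N) (hx0 : 0 ≤ x)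
    (hx : x ≤ A / N ^ (1 / (r : ℝ)) * d ^ (1 / (r : ℝ))) : x ^ r ≤ B * d :=
  calc x ^ r ≤ (A / N ^ (1 / (r : ℝ)) * d ^ (1 / (r : ℝ))) ^ r := pow_le_pow_left₀ hx0 hx r
    _ = A ^ r / N * d := by
        rw [mul_pow, div_pow, one_div, rpow_inv_natCast_pow hN.le hr, rpow_inv_natCast_pow hd hr]
    _ ≤ B * N / N * d := by gcongr
    _ = B * d := by field_simp

theorem div_pow_le_of_pow_le_pow_mul {r : ℕ} (hr : r ≠ 0) {x B d : ℝ} (hd : 0 < d)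
    (h : x ^ r ≤ B ^ (r - 1) * d) : (x / d) ^ r ≤ (B / d) ^ (r - 1) := by
  obtain ⟨k, rfl⟩ := exists_eq_add_one_of_ne_zero hr
  rw [Nat.add_sub_cancel] at h ⊢
  calc (x / d) ^ (k + 1) = x ^ (k + 1) / (d ^ k * d) := by rw [div_pow, pow_succ d]
    _ ≤ B ^ k * d / (d ^ k * d) := by gcongr
    _ = (B / d) ^ k := by rw [div_pow]; field_simp

theorem succ_div_sq_div_three_pow_le {r : ℕ} (hr : r = 2 ∨ r = 3) {n : ℝ} (hn : 4 ≤ n) :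
    ((n + 1) / (n ^ 2 / 3)) ^ (r - 1) ≤ (3 / √n) ^ r := by
  obtain ⟨s, hs, rfl⟩ : ∃ s : ℝ, 2 ≤ s ∧ n = s ^ 2 :=
    ⟨√n, le_sqrt_of_sq_le (by linarith), (sq_sqrt (by linarith)).symm⟩
  have hs0 : 0 < s := by linarith
  rw [sqrt_sq hs0.le]
  rcases hr with rfl | rfl
  · norm_num
    field_simp
    nlinarith
  · norm_num
    field_simp
    have h5 : 2 * s ^ 4 ≤ s ^ 5 := by nlinarith [pow_pos hs0 4]
    have h4 : 4 * s ^ 2 ≤ s ^ 4 := by nlinarith [pow_pos hs0 2]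
    nlinarith

/-- Let `n ≥ 400`, `n = r·m` with `r ∈ {2,3}`, and let `ρ` be an irreducible representation
of `S_n` with dimension `d ≥ n²/3` whose character value `χ` on the class `[r^m]` satisfies
the Fomin–Lulov bound. Then `|χ|/d ≤ 3/√n`. -/
theorem stmt11 (n r m : ℕ) (hn : 400 ≤ n) (hnrm : n = r * m) (hr : r = 2 ∨ r = 3)
    (χ d : ℝ) (hd : (n : ℝ) ^ 2 / 3 ≤ d)
    (hFL : |χ| ≤ (Nat.factorial m : ℝ) * (r : ℝ) ^ m /
        ((Nat.factorial (r * m) : ℝ)) ^ (1 / (r : ℝ)) * d ^ (1 / (r : ℝ))) :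
    |χ| / d ≤ 3 / Real.sqrt (n : ℝ) := by
  have hr0 : r ≠ 0 := by omega
  have hn4 : (4 : ℝ) ≤ n := by exact_mod_cast (by omega : 4 ≤ n)
  have hd0 : 0 < d := lt_of_lt_of_le (by positivity) hd
  rw [← hnrm] at hFL
  have hmultinomial : ((m ! : ℝ) * r ^ m) ^ r ≤ ((n : ℝ) + 1) ^ (r - 1) * n ! := by
    exact_mod_cast hnrm ▸ factorial_mul_pow_pow_le hr m
  have hpow : |χ| ^ r ≤ ((n : ℝ) + 1) ^ (r - 1) * d :=
    pow_le_mul_of_le_div_rpow_mul_rpow hr0 (by positivity) hd0.le hmultinomial (abs_nonneg χ) hFL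
  have hratio : (|χ| / d) ^ r ≤ (3 / √n) ^ r := calc
    (|χ| / d) ^ r ≤ (((n : ℝ) + 1) / d) ^ (r - 1) := div_pow_le_of_pow_le_pow_mul hr0 hd0 hpow
    _ ≤ (((n : ℝ) + 1) / (n ^ 2 / 3)) ^ (r - 1) := by gcongr
    _ ≤ (3 / √n) ^ r := succ_div_sq_div_three_pow_le hr hn4
  exact (pow_le_pow_iff_left₀ (by positivity) (by positivity) hr0).1 hratio
end

section
/- Let λ be a partition of n ≥ 2 whose Young diagram contains the box (2,2), with arm length a (first row minus first cell) and leg length l (first column minus first cell), a ≥ l ≥ 2. Then the number of standard Young tableaux of shape λ is at least C(a+l, l+1). -/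
/-!
Fix `S ⊆ {3, …, a + l + 2}` with `l + 1` elements. The hook of `μ` together with the cell
`(1, 1)` has a standard filling with `1` at the origin, `2` and the complement of `S` increasing
along the arm, and `S` increasing down the leg and on to the corner `(1, 1)`. Ranking the cells
of `μ` by a valuation that agrees with this filling on the hook and is larger, injective and
increasing elsewhere extends it to a standard Young tableau of `μ`, from whose entries on the
leg and the corner `S` is read off again. So `S ↦ tableau` is injective.
-/

open Finset

section Rank

variable {α β : Type*} [LinearOrder β] (s : Finset α) (v : α → β)

def rank (x : α) : ℕ := #{y ∈ s | v y ≤ v x}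

variable {s v}

theorem rank_lt_rank {x y : α} (hy : y ∈ s) (h : v x < v y) : rank s v x < rank s v y := by
  refine card_lt_card ⟨monotone_filter_right s fun _ _ hz => hz.trans h.le, fun hsub => ?_⟩
  exact (mem_filter.1 (hsub (mem_filter.2 ⟨hy, le_rfl⟩))).2.not_gt h

theorem rank_mem_Icc {x : α} (hx : x ∈ s) : rank s v x ∈ Icc 1 #s :=
  mem_Icc.2 ⟨card_pos.2 ⟨x, mem_filter.2 ⟨hx, le_rfl⟩⟩, card_filter_le _ _⟩

theorem rank_bijOn (hv : Set.InjOn v s) : Set.BijOn (rank s v) s (Icc 1 #s) := by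
  have hinj : Set.InjOn (rank s v) s := by
    intro x hx y hy h
    rcases lt_trichotomy (v x) (v y) with hlt | heq | hgt
    · exact absurd h (rank_lt_rank hy hlt).ne
    · exact hv hx hy heq
    · exact absurd h (rank_lt_rank hx hgt).ne'
  have hmaps : Set.MapsTo (rank s v) s (Icc 1 #s) := fun x hx => rank_mem_Icc hx
  refine ⟨hmaps, hinj, surjOn_of_injOn_of_card_le _ hmaps hinj ?_⟩
  rw [Nat.card_Icc, Nat.add_sub_cancel]

theorem rank_eq_self {v : α → ℕ} (hv : Set.InjOn v s) (hpos : ∀ y ∈ s, 0 < v y) {x : α}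
    (hx : Icc 1 (v x) ⊆ s.image v) : rank s v x = v x := by
  have himage : {y ∈ s | v y ≤ v x}.image v = Icc 1 (v x) := by
    refine Subset.antisymm (fun t ht => ?_) (fun t ht => ?_)
    · obtain ⟨y, hy, rfl⟩ := mem_image.1 ht
      obtain ⟨hys, hyx⟩ := mem_filter.1 hy
      exact mem_Icc.2 ⟨hpos y hys, hyx⟩
    · obtain ⟨y, hy, rfl⟩ := mem_image.1 (hx ht)
      exact mem_image_of_mem v (mem_filter.2 ⟨hy, (mem_Icc.1 ht).2⟩)
  rw [rank, ← card_image_of_injOn (hv.mono (coe_subset.2 (filter_subset _ s))), himage,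
    Nat.card_Icc, Nat.add_sub_cancel]

end Rank

theorem isSYT_rank {μ : YoungDiagram} {v : ℕ × ℕ → ℕ} (hv : Set.InjOn v μ.cells)
    (hrow : ∀ p q : ℕ × ℕ, p ∈ μ → q ∈ μ → p.1 = q.1 → p.2 < q.2 → v p < v q)
    (hcol : ∀ p q : ℕ × ℕ, p ∈ μ → q ∈ μ → p.2 = q.2 → p.1 < q.1 → v p < v q) :
    IsSYT μ (fun p => if p ∈ μ then rank μ.cells v p else 0) := by
  have hbij := rank_bijOn hv
  rw [coe_Icc] at hbij
  refine ⟨hbij.congr fun p hp => (if_pos ((μ.mem_cells p).1 hp)).symm,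
    fun p hp => if_neg hp, fun p q hp hq h₁ h₂ => ?_, fun p q hp hq h₁ h₂ => ?_⟩ <;>
  simp only [if_pos hp, if_pos hq]
  · exact rank_lt_rank ((μ.mem_cells q).2 hq) (hrow p q hp hq h₁ h₂)
  · exact rank_lt_rank ((μ.mem_cells q).2 hq) (hcol p q hp hq h₁ h₂)

/-- `Nat.pair` is injective and strictly increasing in each argument, so the cells outside `ν`
get distinct values, above all entries of `f` and increasing along rows and columns. -/
def extendFilling (ν : YoungDiagram) (f : ℕ × ℕ → ℕ) (p : ℕ × ℕ) : ℕ :=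
  if p ∈ ν then f p else ν.card + 1 + Nat.pair p.1 p.2

namespace IsSYT

variable {ν : YoungDiagram} {f : ℕ × ℕ → ℕ}

theorem apply_mem_Icc (hf : IsSYT ν f) {p : ℕ × ℕ} (hp : p ∈ ν) : f p ∈ Set.Icc 1 ν.card :=
  hf.1.mapsTo ((ν.mem_cells p).2 hp)

theorem extendFilling_pos (hf : IsSYT ν f) (p : ℕ × ℕ) : 0 < extendFilling ν f p := by
  unfold extendFilling
  split_ifs with hp
  · exact (hf.apply_mem_Icc hp).1
  · omega

theorem extendFilling_injective (hf : IsSYT ν f) : Function.Injective (extendFilling ν f) := by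
  intro p q h
  unfold extendFilling at h
  split_ifs at h with hp hq hq
  · exact hf.1.injOn ((ν.mem_cells p).2 hp) ((ν.mem_cells q).2 hq) h
  · have := (hf.apply_mem_Icc hp).2; omega
  · have := (hf.apply_mem_Icc hq).2; omega
  · exact Prod.ext_iff.2 (Nat.pair_eq_pair.1 (by omega))

theorem extendFilling_lt_extendFilling (hf : IsSYT ν f) {p q : ℕ × ℕ} (hpq : p ≤ q)
    (hin : p ∈ ν → q ∈ ν → f p < f q) (hpair : Nat.pair p.1 p.2 < Nat.pair q.1 q.2) :
    extendFilling ν f p < extendFilling ν f q := by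
  by_cases hq : q ∈ ν
  · have hp : p ∈ ν := ν.isLowerSet hpq hq
    simpa only [extendFilling, if_pos hp, if_pos hq] using hin hp hq
  · by_cases hp : p ∈ ν
    · have := (hf.apply_mem_Icc hp).2
      simp only [extendFilling, if_pos hp, if_neg hq]
      omega
    · simp only [extendFilling, if_neg hp, if_neg hq]
      omega

theorem exists_extension {μ : YoungDiagram} (hνμ : ν ≤ μ) (hf : IsSYT ν f) :
    ∃ g, IsSYT μ g ∧ ∀ p ∈ ν, g p = f p := by
  refine ⟨_, isSYT_rank hf.extendFilling_injective.injOn ?_ ?_, fun p hp => ?_⟩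
  · rintro ⟨i, j⟩ ⟨i', j'⟩ - - rfl h₂
    exact hf.extendFilling_lt_extendFilling (Prod.mk_le_mk.2 ⟨le_rfl, h₂.le⟩)
      (fun hp hq => hf.2.2.1 _ _ hp hq rfl h₂) (Nat.pair_lt_pair_right i h₂)
  · rintro ⟨i, j⟩ ⟨i', j'⟩ - - rfl h₂
    exact hf.extendFilling_lt_extendFilling (Prod.mk_le_mk.2 ⟨h₂.le, le_rfl⟩)
      (fun hp hq => hf.2.2.2 _ _ hp hq rfl h₂) (Nat.pair_lt_pair_left j h₂)
  · have hfp : extendFilling ν f p = f p := if_pos hp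
    rw [if_pos (hνμ hp), rank_eq_self hf.extendFilling_injective.injOn
      (fun y _ => hf.extendFilling_pos y), hfp]
    intro t ht
    rw [hfp, mem_Icc] at ht
    obtain ⟨q, hq, rfl⟩ := hf.1.surjOn ⟨ht.1, ht.2.trans (hf.apply_mem_Icc hp).2⟩
    have hq' : q ∈ ν := (ν.mem_cells q).1 hq
    exact mem_image.2 ⟨q, (μ.mem_cells q).2 (hνμ hq'), if_pos hq'⟩

end IsSYT

namespace Finset

variable {s : Finset ℕ}

theorem image_nth_range_card (s : Finset ℕ) : (range #s).image (Nat.nth (· ∈ s)) = s := by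
  have h := Nat.image_nth_Iio_card s.finite_toSet
  rw [finite_toSet_toFinset] at h
  exact coe_injective (by simpa using h)

theorem nth_lt_nth {j k : ℕ} (hjk : j < k) (hk : k < #s) :
    Nat.nth (· ∈ s) j < Nat.nth (· ∈ s) k :=
  Nat.nth_lt_nth_of_lt_card s.finite_toSet hjk (by rwa [finite_toSet_toFinset])

theorem nth_zero_le {x : ℕ} (hx : x ∈ s) : Nat.nth (· ∈ s) 0 ≤ x := by
  rw [Nat.nth_zero]
  exact Nat.sInf_le hx

theorem nth_mem {k : ℕ} (hk : k < #s) : Nat.nth (· ∈ s) k ∈ s :=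
  Nat.nth_mem_of_lt_card (p := (· ∈ s)) s.finite_toSet (by rwa [finite_toSet_toFinset])

end Finset

/-- The hook with arm `a` and leg `l`, plus the cell `(1, 1)` when `1 ≤ a` and `1 ≤ l`. -/
def hookCorner (a l : ℕ) : YoungDiagram where
  cells := {p ∈ range (l + 1) ×ˢ range (a + 1) | p.1 = 0 ∨ p.2 = 0 ∨ p = (1, 1)}
  isLowerSet := by
    rintro ⟨i', j'⟩ ⟨i, j⟩ hle hmem
    simp only [Prod.mk_le_mk] at hle
    simp only [coe_filter, mem_product, mem_range, Prod.mk.injEq, Set.mem_ofPred_eq] at hmem ⊢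
    omega

theorem mem_hookCorner {a l i j : ℕ} :
    (i, j) ∈ hookCorner a l ↔ i ≤ l ∧ j ≤ a ∧ (i = 0 ∨ j = 0 ∨ i = 1 ∧ j = 1) := by
  rw [← YoungDiagram.mem_cells]
  simp only [hookCorner, mem_filter, mem_product, mem_range, Prod.mk.injEq]
  omega

theorem hookCorner_le {μ : YoungDiagram} (h11 : (1, 1) ∈ μ) :
    hookCorner (μ.rowLen 0 - 1) (μ.colLen 0 - 1) ≤ μ := by
  rintro ⟨i, j⟩ hij
  have hrow := YoungDiagram.mem_iff_lt_rowLen.1 (μ.up_left_mem zero_le_one le_rfl h11)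
  have hcol := YoungDiagram.mem_iff_lt_colLen.1 (μ.up_left_mem le_rfl zero_le_one h11)
  obtain ⟨hi, hj, rfl | rfl | ⟨rfl, rfl⟩⟩ := mem_hookCorner.1 hij
  · exact YoungDiagram.mem_iff_lt_rowLen.2 (by omega)
  · exact YoungDiagram.mem_iff_lt_colLen.2 (by omega)
  · exact h11

def armCells (a : ℕ) : Finset (ℕ × ℕ) := (range a).image fun j => (0, j + 1)

def legCornerCells (l : ℕ) : Finset (ℕ × ℕ) := insert (1, 1) ((range l).image fun i => (i + 1, 0))

theorem hookCorner_cells {a l : ℕ} (ha : 1 ≤ a) (hl : 1 ≤ l) :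
    (hookCorner a l).cells = insert (0, 0) (armCells a ∪ legCornerCells l) := by
  ext ⟨i, j⟩
  rw [YoungDiagram.mem_cells, mem_hookCorner]
  simp only [armCells, legCornerCells, mem_insert, mem_union, mem_image, mem_range,
    Prod.mk.injEq]
  constructor
  · rintro ⟨hi, hj, rfl | rfl | ⟨rfl, rfl⟩⟩
    · rcases j with _ | j
      · exact Or.inl ⟨rfl, rfl⟩
      · exact Or.inr (Or.inl ⟨j, by omega, rfl, rfl⟩)
    · rcases i with _ | i
      · exact Or.inl ⟨rfl, rfl⟩
      · exact Or.inr (Or.inr (Or.inr ⟨i, by omega, rfl, rfl⟩))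
    · exact Or.inr (Or.inr (Or.inl ⟨rfl, rfl⟩))
  · rintro (⟨rfl, rfl⟩ | ⟨j, hj, rfl, rfl⟩ | ⟨rfl, rfl⟩ | ⟨i, hi, rfl, rfl⟩) <;> omega

theorem legCornerCells_subset {a l : ℕ} (ha : 1 ≤ a) (hl : 1 ≤ l) :
    legCornerCells l ⊆ (hookCorner a l).cells := by
  rw [hookCorner_cells ha hl]
  exact subset_union_right.trans (subset_insert _ _)

def armValues (a l : ℕ) (S : Finset ℕ) : Finset ℕ := Icc 2 (a + l + 2) \ S

noncomputable def hookFilling (a l : ℕ) (S : Finset ℕ) (p : ℕ × ℕ) : ℕ :=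
  if p ∉ hookCorner a l then 0
  else if p = (0, 0) then 1
  else if p.1 = 0 then Nat.nth (· ∈ armValues a l S) (p.2 - 1)
  else if p.2 = 0 then Nat.nth (· ∈ S) (p.1 - 1)
  else Nat.nth (· ∈ S) l

section HookFilling

variable {a l : ℕ} {S : Finset ℕ}

theorem hookFilling_zero_zero : hookFilling a l S (0, 0) = 1 := by
  simp [hookFilling, mem_hookCorner]

theorem hookFilling_arm {j : ℕ} (hj : j < a) :
    hookFilling a l S (0, j + 1) = Nat.nth (· ∈ armValues a l S) j := by
  simp [hookFilling, mem_hookCorner, Nat.succ_le_of_lt hj]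

theorem hookFilling_leg {i : ℕ} (hi : i < l) :
    hookFilling a l S (i + 1, 0) = Nat.nth (· ∈ S) i := by
  simp [hookFilling, mem_hookCorner, Nat.succ_le_of_lt hi]

theorem hookFilling_one_one (ha : 1 ≤ a) (hl : 1 ≤ l) :
    hookFilling a l S (1, 1) = Nat.nth (· ∈ S) l := by
  simp [hookFilling, mem_hookCorner, ha, hl]

theorem card_armValues (hS : S ⊆ Icc 3 (a + l + 2)) (hSc : #S = l + 1) :
    #(armValues a l S) = a := by
  have hS2 : S ⊆ Icc 2 (a + l + 2) := hS.trans (Icc_subset_Icc_left (by norm_num))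
  rw [armValues, card_sdiff_of_subset hS2, Nat.card_Icc, hSc]
  omega

theorem image_armCells (hS : S ⊆ Icc 3 (a + l + 2)) (hSc : #S = l + 1) :
    (armCells a).image (hookFilling a l S) = armValues a l S := by
  conv_rhs => rw [← (armValues a l S).image_nth_range_card, card_armValues hS hSc]
  rw [armCells, image_image]
  exact image_congr fun j hj => hookFilling_arm (mem_range.1 hj)

theorem image_legCornerCells (ha : 1 ≤ a) (hl : 1 ≤ l) (hSc : #S = l + 1) :
    (legCornerCells l).image (hookFilling a l S) = S := by
  conv_rhs => rw [← S.image_nth_range_card, hSc, range_add_one, image_insert]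
  rw [legCornerCells, image_insert, image_image, hookFilling_one_one ha hl]
  exact congrArg _ (image_congr fun i hi => hookFilling_leg (mem_range.1 hi))

theorem image_hookCorner (ha : 1 ≤ a) (hl : 1 ≤ l) (hS : S ⊆ Icc 3 (a + l + 2))
    (hSc : #S = l + 1) :
    (hookCorner a l).cells.image (hookFilling a l S) = Icc 1 (a + l + 2) := by
  have hS2 : S ⊆ Icc 2 (a + l + 2) := hS.trans (Icc_subset_Icc_left (by norm_num))
  rw [hookCorner_cells ha hl, image_insert, image_union, image_armCells hS hSc,
    image_legCornerCells ha hl hSc, hookFilling_zero_zero, armValues, sdiff_union_of_subset hS2]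
  exact insert_Icc_add_one_left_eq_Icc (by omega)

theorem card_hookCorner_le (ha : 1 ≤ a) (hl : 1 ≤ l) :
    #(hookCorner a l).cells ≤ a + l + 2 := by
  rw [hookCorner_cells ha hl]
  calc #(insert (0, 0) (armCells a ∪ legCornerCells l))
      ≤ #(armCells a) + #(legCornerCells l) + 1 :=
        (card_insert_le _ _).trans (Nat.add_le_add_right (card_union_le _ _) 1)
    _ ≤ a + (l + 1) + 1 := by
        gcongr
        · exact card_image_le.trans (card_range a).le
        · exact (card_insert_le _ _).trans
            (Nat.add_le_add_right (card_image_le.trans (card_range l).le) 1)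
    _ = a + l + 2 := by ring

theorem two_mem_armValues (hS : S ⊆ Icc 3 (a + l + 2)) : 2 ∈ armValues a l S :=
  mem_sdiff.2 ⟨mem_Icc.2 ⟨le_rfl, by omega⟩, fun h => by have := (mem_Icc.1 (hS h)).1; omega⟩

theorem two_le_nth_armValues (hS : S ⊆ Icc 3 (a + l + 2)) (hSc : #S = l + 1) {k : ℕ}
    (hk : k < a) : 2 ≤ Nat.nth (· ∈ armValues a l S) k := by
  have := mem_sdiff.1 (nth_mem (s := armValues a l S) (by rwa [card_armValues hS hSc]))
  exact (mem_Icc.1 this.1).1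

theorem three_le_nth (hS : S ⊆ Icc 3 (a + l + 2)) (hSc : #S = l + 1) {k : ℕ} (hk : k ≤ l) :
    3 ≤ Nat.nth (· ∈ S) k :=
  (mem_Icc.1 (hS (nth_mem (by omega)))).1

theorem hookFilling_lt_of_row (ha : 1 ≤ a) (hl : 1 ≤ l) (hS : S ⊆ Icc 3 (a + l + 2))
    (hSc : #S = l + 1) {i j j' : ℕ} (hq : (i, j') ∈ hookCorner a l) (hjj : j < j') :
    hookFilling a l S (i, j) < hookFilling a l S (i, j') := by
  obtain ⟨-, hj', rfl | rfl | ⟨rfl, rfl⟩⟩ := mem_hookCorner.1 hq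
  · obtain _ | k := j'
    · omega
    rw [hookFilling_arm (by omega)]
    obtain _ | m := j
    · rw [hookFilling_zero_zero]
      exact two_le_nth_armValues hS hSc (by omega)
    · rw [hookFilling_arm (by omega)]
      exact nth_lt_nth (by omega) (by rw [card_armValues hS hSc]; omega)
  · omega
  · obtain rfl : j = 0 := by omega
    rw [hookFilling_one_one ha hl, show ((1 : ℕ), (0 : ℕ)) = (0 + 1, 0) from rfl,
      hookFilling_leg hl]
    exact nth_lt_nth hl (by omega)

theorem hookFilling_lt_of_col (ha : 1 ≤ a) (hl : 1 ≤ l) (hS : S ⊆ Icc 3 (a + l + 2))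
    (hSc : #S = l + 1) {i i' j : ℕ} (hq : (i', j) ∈ hookCorner a l) (hii : i < i') :
    hookFilling a l S (i, j) < hookFilling a l S (i', j) := by
  obtain ⟨hi', -, rfl | rfl | ⟨rfl, rfl⟩⟩ := mem_hookCorner.1 hq
  · omega
  · obtain _ | k := i'
    · omega
    rw [hookFilling_leg (by omega)]
    obtain _ | m := i
    · rw [hookFilling_zero_zero]
      linarith [three_le_nth hS hSc (k := k) (by omega)]
    · rw [hookFilling_leg (by omega)]
      exact nth_lt_nth (by omega) (by omega)
  · obtain rfl : i = 0 := by omega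
    rw [hookFilling_one_one ha hl, show ((0 : ℕ), (1 : ℕ)) = (0, 0 + 1) from rfl,
      hookFilling_arm ha]
    have := nth_zero_le (two_mem_armValues hS)
    linarith [three_le_nth hS hSc (k := l) le_rfl]

theorem isSYT_hookFilling (ha : 1 ≤ a) (hl : 1 ≤ l) (hS : S ⊆ Icc 3 (a + l + 2))
    (hSc : #S = l + 1) : IsSYT (hookCorner a l) (hookFilling a l S) := by
  have himage := image_hookCorner ha hl hS hSc
  have hcard : (hookCorner a l).card = a + l + 2 := by
    refine le_antisymm (card_hookCorner_le ha hl) ?_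
    simpa [himage] using card_image_le (s := (hookCorner a l).cells) (f := hookFilling a l S)
  refine ⟨?_, fun p hp => if_pos hp, ?_, ?_⟩
  · rw [hcard, ← coe_Icc]
    exact (image_eq_iff_bijOn_of_card (hcard.le.trans (by simp))).1 himage
  · rintro ⟨i, j⟩ ⟨i', j'⟩ - hq rfl hjj
    exact hookFilling_lt_of_row ha hl hS hSc hq hjj
  · rintro ⟨i, j⟩ ⟨i', j'⟩ - hq rfl hii
    exact hookFilling_lt_of_col ha hl hS hSc hq hii

end HookFilling

theorem finite_setOf_isSYT (μ : YoungDiagram) : {f : ℕ × ℕ → ℕ | IsSYT μ f}.Finite := by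
  refine Set.Finite.of_injOn (f := fun f (p : μ.cells) => f p)
    (t := Set.univ.pi fun _ => Set.Iic μ.card) ?_ ?_ (Set.Finite.pi fun _ => Set.finite_Iic _)
  · exact fun f hf p _ => (hf.apply_mem_Icc ((μ.mem_cells _).1 p.2)).2
  · intro f hf g hg hfg
    funext p
    by_cases hp : p ∈ μ
    · exact congrFun hfg ⟨p, (μ.mem_cells p).2 hp⟩
    · rw [hf.2.1 p hp, hg.2.1 p hp]

theorem card_le_sytCount {μ : YoungDiagram} {β : Type*} (φ : (ℕ × ℕ → ℕ) → β) (T : Finset β)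
    (hT : ∀ t ∈ T, ∃ g, IsSYT μ g ∧ φ g = t) : #T ≤ sytCount μ := by
  rw [sytCount, ← Set.ncard_coe_finset]
  calc (T : Set β).ncard ≤ (φ '' {g | IsSYT μ g}).ncard :=
        Set.ncard_le_ncard (fun t ht => hT t ht) ((finite_setOf_isSYT μ).image φ)
    _ ≤ {g | IsSYT μ g}.ncard := Set.ncard_image_le (finite_setOf_isSYT μ)
    _ = Nat.card {g // IsSYT μ g} := (Nat.card_coe_set_eq _).symm

theorem stmt19_general (μ : YoungDiagram) (h22 : (1, 1) ∈ μ) (a l : ℕ)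
    (ha : a = μ.rowLen 0 - 1) (hl : l = μ.colLen 0 - 1) :
    (a + l).choose (l + 1) ≤ sytCount μ := by
  have ha1 : 1 ≤ a := by
    have := YoungDiagram.mem_iff_lt_rowLen.1 (μ.up_left_mem zero_le_one le_rfl h22); omega
  have hl1 : 1 ≤ l := by
    have := YoungDiagram.mem_iff_lt_colLen.1 (μ.up_left_mem le_rfl zero_le_one h22); omega
  have hle : hookCorner a l ≤ μ := ha ▸ hl ▸ hookCorner_le h22
  have hcard : #((Icc 3 (a + l + 2)).powersetCard (l + 1)) = (a + l).choose (l + 1) := by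
    rw [card_powersetCard, Nat.card_Icc, show a + l + 2 + 1 - 3 = a + l by omega]
  rw [← hcard]
  refine card_le_sytCount (fun g => (legCornerCells l).image g) _ fun S hS => ?_
  obtain ⟨hS, hSc⟩ := mem_powersetCard.1 hS
  obtain ⟨g, hg, hgf⟩ := (isSYT_hookFilling ha1 hl1 hS hSc).exists_extension hle
  refine ⟨g, hg, (image_congr fun p hp => ?_).trans (image_legCornerCells ha1 hl1 hSc)⟩
  exact hgf p ((YoungDiagram.mem_cells p).1 (legCornerCells_subset ha1 hl1 hp))

/-- Let `λ` be a partition of `n ≥ 2` containing the box `(2,2)` (0-indexed `(1,1)`), with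
arm length `a` (first row minus the corner) and leg length `l` (first column minus the
corner), `a ≥ l ≥ 2`. Then the number of standard Young tableaux of shape `λ` is at least
`C(a+l, l+1)`. -/
theorem stmt19 (μ : YoungDiagram) (n : ℕ) (hn : 2 ≤ n) (hcard : μ.card = n)
    (h22 : (1, 1) ∈ μ) (a l : ℕ)
    (ha : a = μ.rowLen 0 - 1) (hl : l = μ.colLen 0 - 1)
    (hla : l ≤ a) (hl2 : 2 ≤ l) :
    (a + l).choose (l + 1) ≤ sytCount μ :=
  stmt19_general μ h22 a l ha hl
end
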